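/- arXiv:2110.15812 — 6 statements merged into one kernel-verified Lean document; each statement's English description precedes it below -/
import Mathlib

section
/- Let Φ be a Young function, C¹ on [0,∞), C² on (0,∞), with Φ''>0 on (0,∞) and with lim_{s→0+} Φ'(s)/s = 0, and suppose 1 < m̃ := inf_{s>0} sΦ''(s)/Φ'(s) and M̃ := sup_{s>0} sΦ''(s)/Φ'(s) < ∞. Then for every t ∈ (0,∞): (1/(M̃−1)) · Φ'(t)/t ≤ ∫_0^t Φ'(s)/s² ds ≤ (1/(m̃−1)) · Φ'(t)/t. In particular, s ↦ Φ'(s)/s² is integrable near 0. -/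
open Set Filter MeasureTheory Topology

/-!
Write `φ = Φ'` and `e(s) = s φ'(s) / φ(s)`, so that `m̃ ≤ e ≤ M̃` on `(0, ∞)`; in particular
`φ > 0` there. The quotient rule gives `(φ(s)/s)' = (e(s) - 1) · φ(s)/s²`, hence
`(m̃ - 1) φ(s)/s² ≤ (φ(s)/s)' ≤ (M̃ - 1) φ(s)/s²`. The middle term is nonnegative, so it is
integrable on `(0, t]` and integrates to `φ(t)/t`, because `φ(s)/s → 0` as `s → 0+`;
integrating the two outer bounds gives the claim.
-/

theorem integrableOn_Ioc_and_integral_eq_sub_of_deriv_nonneg {g g' : ℝ → ℝ}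
    {a b : ℝ} (hab : a ≤ b) (hcont : ContinuousOn g (Icc a b))
    (hderiv : ∀ x ∈ Ioo a b, HasDerivAt g (g' x) x) (hpos : ∀ x ∈ Ioo a b, 0 ≤ g' x) :
    IntegrableOn g' (Ioc a b) ∧ ∫ x in Ioc a b, g' x = g b - g a := by
  have hint := intervalIntegral.integrableOn_deriv_of_nonneg hcont hderiv hpos
  refine ⟨hint, ?_⟩
  rw [← intervalIntegral.integral_of_le hab]
  exact intervalIntegral.integral_eq_sub_of_hasDerivAt_of_le hab hcont hderiv
    ((intervalIntegrable_iff_integrableOn_Ioc_of_le hab).2 hint)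

theorem integrableOn_Ioc_and_integral_bounds_of_deriv_bounds {f g g' : ℝ → ℝ}
    {a b m M : ℝ} (hab : a ≤ b) (hm : 0 < m) (hcont : ContinuousOn g (Icc a b))
    (hderiv : ∀ x ∈ Ioo a b, HasDerivAt g (g' x) x)
    (hf : AEStronglyMeasurable f (volume.restrict (Ioo a b))) (hf0 : ∀ x ∈ Ioo a b, 0 ≤ f x)
    (hlow : ∀ x ∈ Ioo a b, m * f x ≤ g' x) (hup : ∀ x ∈ Ioo a b, g' x ≤ M * f x) :
    IntegrableOn f (Ioc a b) ∧ m * ∫ x in Ioc a b, f x ≤ g b - g a ∧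
      g b - g a ≤ M * ∫ x in Ioc a b, f x := by
  obtain ⟨hg'int, hFTC⟩ := integrableOn_Ioc_and_integral_eq_sub_of_deriv_nonneg hab hcont hderiv
    fun x hx => (mul_nonneg hm.le (hf0 x hx)).trans (hlow x hx)
  rw [integral_Ioc_eq_integral_Ioo] at hFTC
  rw [integrableOn_Ioc_iff_integrableOn_Ioo] at hg'int
  have hfint : IntegrableOn f (Ioo a b) := by
    refine Integrable.mono' (hg'int.const_mul m⁻¹) hf
      ((ae_restrict_iff' measurableSet_Ioo).2 (Eventually.of_forall fun x hx => ?_))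
    rw [Real.norm_of_nonneg (hf0 x hx), le_inv_mul_iff₀ hm]
    exact hlow x hx
  rw [integrableOn_Ioc_iff_integrableOn_Ioo, integral_Ioc_eq_integral_Ioo, ← hFTC]
  refine ⟨hfint, ?_, ?_⟩ <;> rw [← integral_const_mul]
  · exact setIntegral_mono_on (hfint.const_mul m) hg'int measurableSet_Ioo hlow
  · exact setIntegral_mono_on hg'int (hfint.const_mul M) measurableSet_Ioo hup

theorem continuousOn_Icc_of_tendsto_nhdsGT {g : ℝ → ℝ} {a b : ℝ}
    (h : ∀ x ∈ Ioc a b, ContinuousAt g x) (ha : Tendsto g (𝓝[>] a) (𝓝 (g a))) :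
    ContinuousOn g (Icc a b) := by
  intro x hx
  rcases eq_or_lt_of_le hx.1 with rfl | hax
  · exact (continuousWithinAt_Ioi_iff_Ici.1 ha).mono Icc_subset_Ici_self
  · exact (h x ⟨hax, hx.2⟩).continuousWithinAt

theorem HasDerivAt.div_id {φ : ℝ → ℝ} {ψ s : ℝ} (hφ : HasDerivAt φ ψ s) (hs : s ≠ 0)
    (hφs : φ s ≠ 0) :
    HasDerivAt (fun x => φ x / x) ((s * ψ / φ s - 1) * (φ s / s ^ 2)) s := by
  have h : HasDerivAt (fun x => φ x / x) ((ψ * s - φ s * 1) / s ^ 2) s :=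
    hφ.div (hasDerivAt_id s) hs
  convert h using 1
  field_simp

theorem ContDiffOn.hasDerivAt_deriv {f : ℝ → ℝ} {s : Set ℝ} (hf : ContDiffOn ℝ 2 f s)
    (hs : IsOpen s) {x : ℝ} (hx : x ∈ s) : HasDerivAt (deriv f) (deriv (deriv f) x) x :=
  (((hf.deriv_of_isOpen hs (m := 1) (by norm_num)).differentiableOn one_ne_zero x hx
    ).differentiableAt (hs.mem_nhds hx)).hasDerivAt

theorem Real.bddBelow_of_sInf_ne_zero {S : Set ℝ} (h : sInf S ≠ 0) : BddBelow S :=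
  not_not.1 fun hS => h (Real.sInf_of_not_bddBelow hS)

theorem integral_phi_prime_div_sq_bounds_general
    (Φ : ℝ → ℝ) (mt Mt : ℝ)
    (hC2 : ContDiffOn ℝ 2 Φ (Ioi 0))
    (hΦ'' : ∀ s ∈ Ioi (0:ℝ), 0 < deriv (deriv Φ) s)
    (hlim' : Tendsto (fun s => deriv Φ s / s) (nhdsWithin 0 (Ioi 0)) (nhds 0))
    (hmt : mt = sInf {x : ℝ | ∃ s ∈ Ioi (0:ℝ), x = s * deriv (deriv Φ) s / deriv Φ s})
    (hMt : Mt = sSup {x : ℝ | ∃ s ∈ Ioi (0:ℝ), x = s * deriv (deriv Φ) s / deriv Φ s})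
    (hbdd : BddAbove {x : ℝ | ∃ s ∈ Ioi (0:ℝ), x = s * deriv (deriv Φ) s / deriv Φ s})
    (hmt1 : 1 < mt) :
    ∀ t ∈ Ioi (0:ℝ),
      IntegrableOn (fun s => deriv Φ s / s ^ 2) (Ioc 0 t) ∧
      (1 / (Mt - 1)) * (deriv Φ t / t) ≤ ∫ s in Ioc (0:ℝ) t, deriv Φ s / s ^ 2 ∧
      ∫ s in Ioc (0:ℝ) t, deriv Φ s / s ^ 2 ≤ (1 / (mt - 1)) * (deriv Φ t / t) := by
  intro t ht
  have hmt_le : ∀ s ∈ Ioi (0:ℝ), mt ≤ s * deriv (deriv Φ) s / deriv Φ s := fun s hs =>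
    hmt ▸ csInf_le (Real.bddBelow_of_sInf_ne_zero (by linarith)) ⟨s, hs, rfl⟩
  have hle_Mt : ∀ s ∈ Ioi (0:ℝ), s * deriv (deriv Φ) s / deriv Φ s ≤ Mt := fun s hs =>
    hMt ▸ le_csSup hbdd ⟨s, hs, rfl⟩
  have hMt1 : 0 < Mt - 1 := by
    linarith [hmt_le 1 (mem_Ioi.2 one_pos), hle_Mt 1 (mem_Ioi.2 one_pos)]
  have hpos : ∀ s ∈ Ioi (0:ℝ), 0 < deriv Φ s := fun s hs =>
    (div_pos_iff_of_pos_left (mul_pos hs (hΦ'' s hs))).1 (by linarith [hmt_le s hs])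
  have hderiv : ∀ s ∈ Ioi (0:ℝ), HasDerivAt (fun x => deriv Φ x / x)
      ((s * deriv (deriv Φ) s / deriv Φ s - 1) * (deriv Φ s / s ^ 2)) s := fun s hs =>
    (hC2.hasDerivAt_deriv isOpen_Ioi hs).div_id hs.ne' (hpos s hs).ne'
  -- `deriv Φ 0 / 0 = 0`, so `hlim'` is continuity of `fun s => deriv Φ s / s` at `0`.
  have hcont : ContinuousOn (fun x => deriv Φ x / x) (Icc 0 t) :=
    continuousOn_Icc_of_tendsto_nhdsGT (fun x hx => (hderiv x hx.1).continuousAt)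
      (by simpa using hlim')
  have hf0 : ∀ s ∈ Ioi (0:ℝ), 0 ≤ deriv Φ s / s ^ 2 := fun s hs => by
    have := hpos s hs; positivity
  obtain ⟨hint, hlow, hup⟩ := integrableOn_Ioc_and_integral_bounds_of_deriv_bounds (M := Mt - 1)
    (le_of_lt ht) (sub_pos.2 hmt1) hcont (fun x hx => hderiv x hx.1)
    (by fun_prop : Measurable fun s => deriv Φ s / s ^ 2).aestronglyMeasurable
    (fun x hx => hf0 x hx.1)
    (fun x hx => mul_le_mul_of_nonneg_right (by linarith [hmt_le x hx.1]) (hf0 x hx.1))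
    (fun x hx => mul_le_mul_of_nonneg_right (by linarith [hle_Mt x hx.1]) (hf0 x hx.1))
  simp only [div_zero, sub_zero] at hlow hup
  refine ⟨hint, ?_, ?_⟩
  · rwa [one_div_mul_eq_div, div_le_iff₀' hMt1]
  · rwa [one_div_mul_eq_div, le_div_iff₀' (sub_pos.2 hmt1)]

theorem integral_phi_prime_div_sq_bounds
    (Φ : ℝ → ℝ) (mt Mt : ℝ)
    (hconv : ConvexOn ℝ (Ici 0) Φ) (h0 : Φ 0 = 0)
    (hlim0 : Tendsto (fun s => Φ s / s) (nhdsWithin 0 (Ioi 0)) (nhds 0))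
    (hlimtop : Tendsto (fun s => Φ s / s) atTop atTop)
    (hC1 : ContDiffOn ℝ 1 Φ (Ici 0)) (hC2 : ContDiffOn ℝ 2 Φ (Ioi 0))
    (hΦ'' : ∀ s ∈ Ioi (0:ℝ), 0 < deriv (deriv Φ) s)
    (hlim' : Tendsto (fun s => deriv Φ s / s) (nhdsWithin 0 (Ioi 0)) (nhds 0))
    (hmt : mt = sInf {x : ℝ | ∃ s ∈ Ioi (0:ℝ), x = s * deriv (deriv Φ) s / deriv Φ s})
    (hMt : Mt = sSup {x : ℝ | ∃ s ∈ Ioi (0:ℝ), x = s * deriv (deriv Φ) s / deriv Φ s})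
    (hbdd : BddAbove {x : ℝ | ∃ s ∈ Ioi (0:ℝ), x = s * deriv (deriv Φ) s / deriv Φ s})
    (hmt1 : 1 < mt) :
    ∀ t ∈ Ioi (0:ℝ),
      IntegrableOn (fun s => deriv Φ s / s ^ 2) (Ioc 0 t) ∧
      (1 / (Mt - 1)) * (deriv Φ t / t) ≤ ∫ s in Ioc (0:ℝ) t, deriv Φ s / s ^ 2 ∧
      ∫ s in Ioc (0:ℝ) t, deriv Φ s / s ^ 2 ≤ (1 / (mt - 1)) * (deriv Φ t / t) :=
  integral_phi_prime_div_sq_bounds_general Φ mt Mt hC2 hΦ'' hlim' hmt hMt hbdd hmt1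
end

section
/- Let Ψ be a Young function, C¹ on [0,∞), C² on (0,∞), with Ψ'' > 0 on (0,∞), lim_{s→0+} Ψ'(s)/s = ∞, and suppose 0 < 1/M̃ := inf_{s>0} sΨ''(s)/Ψ'(s) and 1/m̃ := sup_{s>0} sΨ''(s)/Ψ'(s) < 1 (so 1 < m̃ ≤ M̃ < ∞). Then for every t ∈ (0,∞): (M̃/(M̃−1)) · t/Ψ'(t) ≤ ∫_0^t ds/Ψ'(s) ≤ (m̃/(m̃−1)) · t/Ψ'(t). In particular, s ↦ 1/Ψ'(s) is integrable near 0. -/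
/-!
Write φ = Ψ'. The elasticity e(s) = s φ'(s) / φ(s) lies in [1/M̃, 1/m̃], so the derivative
(s / φ(s))' = (1 - e(s)) / φ(s) is squeezed between (1 - 1/m̃) / φ(s) and (1 - 1/M̃) / φ(s); in
particular it is nonnegative. Since φ(s)/s → ∞, s / φ(s) extends continuously by 0 to s = 0,
so the fundamental theorem of calculus on (0, t] (valid for a nonnegative derivative without
assuming integrability) gives ∫₀ᵗ (s / φ(s))' ds = t / φ(t), and integrating the squeeze gives
both integrability of 1/φ and the two bounds.
-/

open Set Filter MeasureTheory Topology

lemma inv_one_sub_inv_eq_div {K : Type*} [Field K] {p : K} (hp : p ≠ 0) :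
    (1 - p⁻¹)⁻¹ = p / (p - 1) := by
  field_simp

lemma Real.bddAbove_of_sSup_ne_zero {S : Set ℝ} (h : sSup S ≠ 0) : BddAbove S := by
  by_contra hS
  exact h (Real.sSup_of_not_bddAbove hS)

lemma pos_of_monotoneOn_of_tendsto_div_atTop {φ : ℝ → ℝ} (hmono : MonotoneOn φ (Ioi 0))
    (hlim : Tendsto (fun s => φ s / s) (𝓝[>] 0) atTop) {s : ℝ} (hs : 0 < s) : 0 < φ s := by
  obtain ⟨x, hφx, hx⟩ := ((hlim.eventually_gt_atTop 0).and (Ioo_mem_nhdsGT hs)).exists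
  exact ((div_pos_iff_of_pos_right hx.1).1 hφx).trans_le (hmono hx.1 hs hx.2.le)

lemma integrableOn_and_setIntegral_eq_of_hasDerivAt_of_nonneg {g g' : ℝ → ℝ} {a b : ℝ}
    (hab : a ≤ b) (hcont : ContinuousOn g (Icc a b))
    (hderiv : ∀ x ∈ Ioo a b, HasDerivAt g (g' x) x) (hnonneg : ∀ x ∈ Ioo a b, 0 ≤ g' x) :
    IntegrableOn g' (Ioc a b) ∧ ∫ x in Ioc a b, g' x = g b - g a := by
  have hint := intervalIntegral.integrableOn_deriv_of_nonneg hcont hderiv hnonneg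
  refine ⟨hint, ?_⟩
  rw [← intervalIntegral.integral_of_le hab]
  exact intervalIntegral.integral_eq_sub_of_hasDerivAt_of_le hab hcont hderiv
    ((intervalIntegrable_iff_integrableOn_Ioc_of_le hab).2 hint)

section

variable {φ φ' : ℝ → ℝ} {t : ℝ}

lemma hasDerivAt_id_div {x : ℝ} (hφ : HasDerivAt φ (φ' x) x) (hx : φ x ≠ 0) :
    HasDerivAt (fun s => s / φ s) ((1 - x * φ' x / φ x) / φ x) x :=
  ((hasDerivAt_id' x).div hφ hx).congr_deriv (by field_simp)

lemma continuousOn_id_div_Icc (hcont : ∀ s ∈ Ioc 0 t, ContinuousAt φ s)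
    (hne : ∀ s ∈ Ioc 0 t, φ s ≠ 0) (hlim : Tendsto (fun s => φ s / s) (𝓝[>] 0) atTop) :
    ContinuousOn (fun s => s / φ s) (Icc 0 t) := by
  intro x hx
  rcases hx.1.eq_or_lt with rfl | hx0
  · have hright : ContinuousWithinAt (fun s => s / φ s) (Ioi 0) 0 := by
      rw [ContinuousWithinAt, zero_div]
      exact hlim.inv_tendsto_atTop.congr fun s => inv_div _ _
    exact (continuousWithinAt_Ioi_iff_Ici.1 hright).mono Icc_subset_Ici_self
  · exact (continuousAt_id.div (hcont x ⟨hx0, hx.2⟩) (hne x ⟨hx0, hx.2⟩)).continuousWithinAt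

theorem integral_inv_bounds_of_elasticity_bounds {a b : ℝ} (ht : 0 < t) (hb : b < 1)
    (hφ : ∀ s ∈ Ioc 0 t, HasDerivAt φ (φ' s) s) (hpos : ∀ s ∈ Ioc 0 t, 0 < φ s)
    (hlim : Tendsto (fun s => φ s / s) (𝓝[>] 0) atTop)
    (hab : ∀ s ∈ Ioc 0 t, s * φ' s / φ s ∈ Icc a b) :
    IntegrableOn (fun s => (φ s)⁻¹) (Ioc 0 t) ∧
      (1 - a)⁻¹ * (t / φ t) ≤ ∫ s in Ioc 0 t, (φ s)⁻¹ ∧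
      ∫ s in Ioc 0 t, (φ s)⁻¹ ≤ (1 - b)⁻¹ * (t / φ t) := by
  set g' : ℝ → ℝ := fun s => (1 - s * φ' s / φ s) / φ s
  have ha : 0 < 1 - a := by linarith [(hab t ⟨ht, le_rfl⟩).1, (hab t ⟨ht, le_rfl⟩).2]
  have hg'_bounds : ∀ s ∈ Ioc 0 t, (1 - b) * (φ s)⁻¹ ≤ g' s ∧ g' s ≤ (1 - a) * (φ s)⁻¹ := by
    intro s hs
    have hinv : 0 ≤ (φ s)⁻¹ := inv_nonneg.2 (hpos s hs).le
    obtain ⟨has, hsb⟩ := hab s hs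
    rw [show g' s = (1 - s * φ' s / φ s) * (φ s)⁻¹ from div_eq_mul_inv _ _]
    exact ⟨mul_le_mul_of_nonneg_right (by linarith) hinv,
      mul_le_mul_of_nonneg_right (by linarith) hinv⟩
  have hg'_nonneg : ∀ s ∈ Ioo 0 t, 0 ≤ g' s := fun s hs =>
    (mul_nonneg (sub_pos.2 hb).le (inv_nonneg.2 (hpos s (Ioo_subset_Ioc_self hs)).le)).trans
      (hg'_bounds s (Ioo_subset_Ioc_self hs)).1
  obtain ⟨hint_g', hFTC⟩ := integrableOn_and_setIntegral_eq_of_hasDerivAt_of_nonneg ht.le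
    (continuousOn_id_div_Icc (fun s hs => (hφ s hs).continuousAt)
      (fun s hs => (hpos s hs).ne') hlim)
    (fun s hs => hasDerivAt_id_div (hφ s (Ioo_subset_Ioc_self hs))
      (hpos s (Ioo_subset_Ioc_self hs)).ne')
    hg'_nonneg
  rw [zero_div, sub_zero] at hFTC
  have hupper : ∀ s ∈ Ioc 0 t, (φ s)⁻¹ ≤ (1 - b)⁻¹ * g' s := fun s hs =>
    (le_inv_mul_iff₀ (sub_pos.2 hb)).2 (hg'_bounds s hs).1
  have hlower : ∀ s ∈ Ioc 0 t, (1 - a)⁻¹ * g' s ≤ (φ s)⁻¹ := fun s hs =>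
    (inv_mul_le_iff₀ ha).2 (hg'_bounds s hs).2
  have hint : IntegrableOn (fun s => (φ s)⁻¹) (Ioc 0 t) := by
    refine (hint_g'.const_mul (1 - b)⁻¹).mono' ?_ ?_
    · exact ContinuousOn.aestronglyMeasurable (fun s hs =>
        ((hφ s hs).continuousAt.inv₀ (hpos s hs).ne').continuousWithinAt) measurableSet_Ioc
    · refine (ae_restrict_iff' measurableSet_Ioc).2 (ae_of_all _ fun s hs => ?_)
      rw [Real.norm_of_nonneg (inv_nonneg.2 (hpos s hs).le)]
      exact hupper s hs
  refine ⟨hint, ?_, ?_⟩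
  · rw [← hFTC, ← integral_const_mul]
    exact setIntegral_mono_on (hint_g'.const_mul _) hint measurableSet_Ioc hlower
  · rw [← hFTC, ← integral_const_mul]
    exact setIntegral_mono_on hint (hint_g'.const_mul _) measurableSet_Ioc hupper

end

theorem integral_inv_psi_prime_bounds_general
    (Ψ : ℝ → ℝ) (mt Mt : ℝ)
    (hC2 : ContDiffOn ℝ 2 Ψ (Ioi 0))
    (hΨ'' : ∀ s ∈ Ioi (0:ℝ), 0 < deriv (deriv Ψ) s)
    (hlim' : Tendsto (fun s => deriv Ψ s / s) (nhdsWithin 0 (Ioi 0)) atTop)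
    (hMt : Mt⁻¹ = sInf {x : ℝ | ∃ s ∈ Ioi (0:ℝ), x = s * deriv (deriv Ψ) s / deriv Ψ s})
    (hmt : mt⁻¹ = sSup {x : ℝ | ∃ s ∈ Ioi (0:ℝ), x = s * deriv (deriv Ψ) s / deriv Ψ s})
    (hmtpos : 1 < mt) (hMtfin : mt ≤ Mt) :
    ∀ t ∈ Ioi (0:ℝ),
      IntegrableOn (fun s => (deriv Ψ s)⁻¹) (Ioc 0 t) ∧
      (Mt / (Mt - 1)) * (t / deriv Ψ t) ≤ ∫ s in Ioc (0:ℝ) t, (deriv Ψ s)⁻¹ ∧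
      ∫ s in Ioc (0:ℝ) t, (deriv Ψ s)⁻¹ ≤ (mt / (mt - 1)) * (t / deriv Ψ t) := by
  have hderiv : ∀ s ∈ Ioi (0:ℝ), HasDerivAt (deriv Ψ) (deriv (deriv Ψ) s) s := fun s hs =>
    (((hC2.deriv_of_isOpen isOpen_Ioi (by norm_num)).differentiableOn one_ne_zero).differentiableAt
      (Ioi_mem_nhds hs)).hasDerivAt
  have hmono : MonotoneOn (deriv Ψ) (Ioi 0) :=
    (strictMonoOn_of_deriv_pos (convex_Ioi 0)
      (fun s hs => (hderiv s hs).continuousAt.continuousWithinAt)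
      (fun s hs => hΨ'' s (by rwa [interior_Ioi] at hs))).monotoneOn
  have hpos : ∀ s ∈ Ioi (0:ℝ), 0 < deriv Ψ s := fun s hs =>
    pos_of_monotoneOn_of_tendsto_div_atTop hmono hlim' hs
  set S := {x : ℝ | ∃ s ∈ Ioi (0:ℝ), x = s * deriv (deriv Ψ) s / deriv Ψ s}
  have hS_bddBelow : BddBelow S := by
    refine ⟨0, ?_⟩
    rintro _ ⟨r, hr, rfl⟩
    exact div_nonneg (mul_nonneg hr.le (hΨ'' r hr).le) (hpos r hr).le
  have hS : S ⊆ Icc Mt⁻¹ mt⁻¹ := hMt ▸ hmt ▸ subset_Icc_csInf_csSup hS_bddBelow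
    (Real.bddAbove_of_sSup_ne_zero (hmt ▸ inv_ne_zero (by linarith)))
  intro t ht
  rw [← inv_one_sub_inv_eq_div (by linarith), ← inv_one_sub_inv_eq_div (by linarith)]
  exact integral_inv_bounds_of_elasticity_bounds ht (inv_lt_one_of_one_lt₀ hmtpos)
    (fun s hs => hderiv s hs.1) (fun s hs => hpos s hs.1) hlim' (fun s hs => hS ⟨s, hs.1, rfl⟩)

theorem integral_inv_psi_prime_bounds
    (Ψ : ℝ → ℝ) (mt Mt : ℝ)
    (hconv : ConvexOn ℝ (Ici 0) Ψ) (h0 : Ψ 0 = 0)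
    (hlim0 : Tendsto (fun s => Ψ s / s) (nhdsWithin 0 (Ioi 0)) (nhds 0))
    (hlimtop : Tendsto (fun s => Ψ s / s) atTop atTop)
    (hC1 : ContDiffOn ℝ 1 Ψ (Ici 0)) (hC2 : ContDiffOn ℝ 2 Ψ (Ioi 0))
    (hΨ'' : ∀ s ∈ Ioi (0:ℝ), 0 < deriv (deriv Ψ) s)
    (hlim' : Tendsto (fun s => deriv Ψ s / s) (nhdsWithin 0 (Ioi 0)) atTop)
    (hMt : Mt⁻¹ = sInf {x : ℝ | ∃ s ∈ Ioi (0:ℝ), x = s * deriv (deriv Ψ) s / deriv Ψ s})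
    (hmt : mt⁻¹ = sSup {x : ℝ | ∃ s ∈ Ioi (0:ℝ), x = s * deriv (deriv Ψ) s / deriv Ψ s})
    (hpos : 0 < sInf {x : ℝ | ∃ s ∈ Ioi (0:ℝ), x = s * deriv (deriv Ψ) s / deriv Ψ s})
    (hlt1 : sSup {x : ℝ | ∃ s ∈ Ioi (0:ℝ), x = s * deriv (deriv Ψ) s / deriv Ψ s} < 1)
    (hmtpos : 1 < mt) (hMtfin : mt ≤ Mt) :
    ∀ t ∈ Ioi (0:ℝ),
      IntegrableOn (fun s => (deriv Ψ s)⁻¹) (Ioc 0 t) ∧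
      (Mt / (Mt - 1)) * (t / deriv Ψ t) ≤ ∫ s in Ioc (0:ℝ) t, (deriv Ψ s)⁻¹ ∧
      ∫ s in Ioc (0:ℝ) t, (deriv Ψ s)⁻¹ ≤ (mt / (mt - 1)) * (t / deriv Ψ t) :=
  integral_inv_psi_prime_bounds_general Ψ mt Mt hC2 hΨ'' hlim' hMt hmt hmtpos hMtfin
end

section
/- Let Φ(s) = s^r log(s + e) for r ∈ (2,∞). Then Φ is a Young function with inf_{s>0} sΦ'(s)/Φ(s) = r, sup_{s>0} sΦ'(s)/Φ(s) < r + 1, inf_{s>0} sΦ''(s)/Φ'(s) = r − 1, and sup_{s>0} sΦ''(s)/Φ'(s) < r. -/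
/-!
With `t = s / (s + e)` and `L = log (s + e)` one computes
`s Φ' / Φ = r + t / L` and `s Φ'' / Φ' = r - 1 + t (r + 1 - t) / (r L + t)`.
Since `0 ≤ t < 1` and `L ≥ 1 + t` (from `log x ≥ 1 - 1/x` at `x = (s + e) / e`), both
correction terms are nonnegative, tend to `0` as `s → 0⁺`, and are bounded by `1/2` and
`(r + 1) / (2r + 1) < 1`. The same bounds give `Φ'' ≥ 0`.
-/

open Set Filter Topology Real

lemma hasDerivAt_log_add_exp_one {s : ℝ} (hs : 0 ≤ s) :
    HasDerivAt (fun x => log (x + exp 1)) (s + exp 1)⁻¹ s := by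
  simpa using ((hasDerivAt_id s).add_const (exp 1)).log (by positivity)

lemma one_add_div_le_log_add_exp_one {s : ℝ} (hs : 0 ≤ s) :
    1 + s / (s + exp 1) ≤ log (s + exp 1) := by
  have h := one_sub_inv_le_log_of_pos (x := (s + exp 1) / exp 1) (by positivity)
  rw [log_div (by positivity) (exp_pos 1).ne', log_exp, inv_div] at h
  have hfrac : s / (s + exp 1) = 1 - exp 1 / (s + exp 1) := by field_simp; ring
  linarith

lemma one_le_log_add_exp_one {s : ℝ} (hs : 0 ≤ s) : 1 ≤ log (s + exp 1) := by
  have := one_add_div_le_log_add_exp_one hs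
  have : 0 ≤ s / (s + exp 1) := by positivity
  linarith

lemma div_add_exp_one_lt_one {s : ℝ} (hs : 0 ≤ s) : s / (s + exp 1) < 1 :=
  (div_lt_one (by positivity)).2 (by linarith [exp_pos 1])

def IsYoungFunction (Φ : ℝ → ℝ) : Prop :=
  ConvexOn ℝ (Ici 0) Φ ∧ Φ 0 = 0 ∧
    Tendsto (fun s => Φ s / s) (𝓝[>] 0) (𝓝 0) ∧ Tendsto (fun s => Φ s / s) atTop atTop

lemma IsYoungFunction.congr {Φ Ψ : ℝ → ℝ} (hΦ : IsYoungFunction Φ) (h : EqOn Φ Ψ (Ici 0)) :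
    IsYoungFunction Ψ := by
  obtain ⟨hconv, hzero, hlim₀, hlim⟩ := hΦ
  refine ⟨hconv.congr h, h self_mem_Ici ▸ hzero, ?_, ?_⟩
  · exact hlim₀.congr'
      (eventually_nhdsWithin_of_forall fun s hs => by rw [h (mem_Ici.2 (le_of_lt hs))])
  · exact hlim.congr' ((eventually_ge_atTop 0).mono fun s hs => by rw [h hs])

def elasticitySet (f : ℝ → ℝ) : Set ℝ := {x | ∃ s ∈ Ioi (0:ℝ), x = s * deriv f s / f s}

lemma elasticitySet_congr {f g : ℝ → ℝ} (h : EqOn f g (Ioi 0)) :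
    elasticitySet f = elasticitySet g := by
  have h' := h.deriv isOpen_Ioi
  ext x
  refine exists_congr fun s => and_congr_right fun hs => ?_
  rw [h hs, h' hs]

lemma elasticitySet_eq_image {f g : ℝ → ℝ} (h : ∀ s ∈ Ioi 0, s * deriv f s / f s = g s) :
    elasticitySet f = g '' Ioi 0 := by
  ext x
  refine exists_congr fun s => and_congr_right fun hs => ?_
  rw [h s hs, eq_comm]

lemma csInf_image_Ioi_eq_of_tendsto {g : ℝ → ℝ} {a : ℝ} (hle : ∀ s ∈ Ioi 0, a ≤ g s)
    (hg : Tendsto g (𝓝[>] 0) (𝓝 a)) : sInf (g '' Ioi 0) = a :=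
  (isGLB_of_mem_closure (forall_mem_image.2 hle) (mem_closure_of_tendsto hg
    (eventually_mem_nhdsWithin.mono fun _ hs => mem_image_of_mem g hs))).csInf_eq
    (nonempty_Ioi.image g)

lemma bddAbove_image_Ioi_and_csSup_lt {g : ℝ → ℝ} {b c : ℝ} (hle : ∀ s ∈ Ioi 0, g s ≤ b)
    (hbc : b < c) : BddAbove (g '' Ioi 0) ∧ sSup (g '' Ioi 0) < c :=
  ⟨⟨b, forall_mem_image.2 hle⟩,
    (csSup_le (nonempty_Ioi.image g) (forall_mem_image.2 hle)).trans_lt hbc⟩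

noncomputable def zygmund (r s : ℝ) : ℝ := s ^ r * log (s + exp 1)

lemma hasDerivAt_zygmund (r : ℝ) {s : ℝ} (hs : 0 < s) :
    HasDerivAt (zygmund r) (s ^ (r - 1) * (r * log (s + exp 1) + s / (s + exp 1))) s := by
  refine ((hasDerivAt_rpow_const (p := r) (Or.inl hs.ne')).mul
    (hasDerivAt_log_add_exp_one hs.le)).congr_deriv ?_
  rw [rpow_sub_one hs.ne']
  field_simp

lemma hasDerivAt_zygmund_deriv (r : ℝ) {s : ℝ} (hs : 0 < s) :
    HasDerivAt (fun x => x ^ (r - 1) * (r * log (x + exp 1) + x / (x + exp 1)))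
      (s ^ (r - 2) * (r * (r - 1) * log (s + exp 1) + 2 * r * (s / (s + exp 1))
        - (s / (s + exp 1)) ^ 2)) s := by
  have hse : s + exp 1 ≠ 0 := by positivity
  refine ((hasDerivAt_rpow_const (p := r - 1) (Or.inl hs.ne')).mul
    (((hasDerivAt_log_add_exp_one hs.le).const_mul r).add
      ((hasDerivAt_id s).div ((hasDerivAt_id s).add_const (exp 1)) hse))).congr_deriv ?_
  have hpow : s ^ (r - 1) = s ^ (r - 2) * s := by
    rw [← rpow_add_one hs.ne']; ring_nf
  rw [show r - 1 - 1 = r - 2 by ring, hpow]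
  simp only [Pi.add_apply, Pi.div_apply, id]
  field_simp
  ring

lemma deriv_zygmund (r : ℝ) {s : ℝ} (hs : 0 < s) :
    deriv (zygmund r) s = s ^ (r - 1) * (r * log (s + exp 1) + s / (s + exp 1)) :=
  (hasDerivAt_zygmund r hs).deriv

lemma deriv_deriv_zygmund (r : ℝ) {s : ℝ} (hs : 0 < s) :
    deriv (deriv (zygmund r)) s = s ^ (r - 2) * (r * (r - 1) * log (s + exp 1)
      + 2 * r * (s / (s + exp 1)) - (s / (s + exp 1)) ^ 2) :=
  ((hasDerivAt_zygmund_deriv r hs).congr_of_eventuallyEq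
    (eventually_of_mem (Ioi_mem_nhds hs) fun _ hx => deriv_zygmund r hx)).deriv

lemma zygmund_div_self (r : ℝ) {s : ℝ} (hs : 0 < s) :
    zygmund r s / s = s ^ (r - 1) * log (s + exp 1) := by
  rw [zygmund, rpow_sub_one hs.ne']
  ring

lemma convexOn_zygmund {r : ℝ} (hr : 1 ≤ r) : ConvexOn ℝ (Ici 0) (zygmund r) := by
  refine convexOn_of_hasDerivWithinAt2_nonneg (convex_Ici 0) ?_
    (fun s hs => (hasDerivAt_zygmund r (by rwa [interior_Ici] at hs)).hasDerivWithinAt)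
    (fun s hs => (hasDerivAt_zygmund_deriv r (by rwa [interior_Ici] at hs)).hasDerivWithinAt) ?_
  · intro s (hs : 0 ≤ s)
    exact ((continuousAt_rpow_const s r (Or.inr (by linarith))).mul
      (hasDerivAt_log_add_exp_one hs).continuousAt).continuousWithinAt
  · rw [interior_Ici]
    intro s (hs : 0 < s)
    have hL := one_le_log_add_exp_one hs.le
    have ht₁ := div_add_exp_one_lt_one hs.le
    have ht₀ : 0 ≤ s / (s + exp 1) := by positivity
    refine mul_nonneg (by positivity) ?_
    nlinarith [mul_nonneg (by nlinarith : 0 ≤ r * (r - 1)) (by linarith : 0 ≤ log (s + exp 1))]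

lemma isYoungFunction_zygmund {r : ℝ} (hr : 1 < r) : IsYoungFunction (zygmund r) := by
  refine ⟨convexOn_zygmund hr.le, by simp [zygmund, (by linarith : r ≠ 0)], ?_, ?_⟩
  · have hcont : ContinuousAt (fun s => s ^ (r - 1) * log (s + exp 1)) 0 :=
      (continuousAt_rpow_const 0 (r - 1) (Or.inr (by linarith))).mul
        (hasDerivAt_log_add_exp_one le_rfl).continuousAt
    refine (tendsto_nhdsWithin_congr (fun s hs => (zygmund_div_self r hs).symm) ?_)
    simpa [zero_rpow (by linarith : r - 1 ≠ 0)] using hcont.tendsto.mono_left nhdsWithin_le_nhds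
  · refine tendsto_atTop_mono' atTop ?_ (tendsto_rpow_atTop (by linarith : 0 < r - 1))
    filter_upwards [eventually_gt_atTop 0] with s hs
    rw [zygmund_div_self r hs]
    exact le_mul_of_one_le_right (by positivity) (one_le_log_add_exp_one hs.le)

lemma mul_deriv_zygmund_div (r : ℝ) {s : ℝ} (hs : 0 < s) :
    s * deriv (zygmund r) s / zygmund r s = r + s / (s + exp 1) / log (s + exp 1) := by
  have hL : log (s + exp 1) ≠ 0 := (one_pos.trans_le (one_le_log_add_exp_one hs.le)).ne'
  have hpow : s ^ r = s ^ (r - 1) * s := by rw [← rpow_add_one hs.ne']; ring_nf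
  rw [deriv_zygmund r hs, zygmund, hpow]
  have : s ^ (r - 1) ≠ 0 := (rpow_pos_of_pos hs _).ne'
  field_simp

lemma mul_deriv_deriv_zygmund_div {r : ℝ} (hr : 0 ≤ r) {s : ℝ} (hs : 0 < s) :
    s * deriv (deriv (zygmund r)) s / deriv (zygmund r) s
      = r - 1 + s / (s + exp 1) * (r + 1 - s / (s + exp 1))
        / (r * log (s + exp 1) + s / (s + exp 1)) := by
  have hD : 0 < r * log (s + exp 1) + s / (s + exp 1) := by
    have := mul_nonneg hr (zero_le_one.trans (one_le_log_add_exp_one hs.le))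
    have : 0 < s / (s + exp 1) := by positivity
    linarith
  have hpow : s ^ (r - 1) = s ^ (r - 2) * s := by rw [← rpow_add_one hs.ne']; ring_nf
  have : s ^ (r - 2) ≠ 0 := (rpow_pos_of_pos hs _).ne'
  rw [deriv_deriv_zygmund r hs, deriv_zygmund r hs, hpow]
  generalize s / (s + exp 1) = t at hD ⊢
  field_simp
  ring

lemma csInf_elasticitySet_zygmund (r : ℝ) : sInf (elasticitySet (zygmund r)) = r := by
  rw [elasticitySet_eq_image fun s hs => mul_deriv_zygmund_div r hs]
  refine csInf_image_Ioi_eq_of_tendsto (fun s (hs : 0 < s) => ?_) ?_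
  · have hL := one_le_log_add_exp_one hs.le
    have : 0 ≤ s / (s + exp 1) / log (s + exp 1) := by positivity
    linarith
  · have hcont : ContinuousAt (fun s => r + s / (s + exp 1) / log (s + exp 1)) 0 := by
      fun_prop (disch := simp)
    simpa using hcont.tendsto.mono_left nhdsWithin_le_nhds

lemma bddAbove_elasticitySet_zygmund_and_csSup_lt (r : ℝ) :
    BddAbove (elasticitySet (zygmund r)) ∧ sSup (elasticitySet (zygmund r)) < r + 1 := by
  rw [elasticitySet_eq_image fun s hs => mul_deriv_zygmund_div r hs]
  refine bddAbove_image_Ioi_and_csSup_lt (b := r + 1 / 2) (fun s (hs : 0 < s) => ?_) (by norm_num)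
  have hL := one_add_div_le_log_add_exp_one hs.le
  have ht := div_add_exp_one_lt_one hs.le
  have : s / (s + exp 1) / log (s + exp 1) ≤ 1 / 2 := by
    rw [div_le_iff₀ (by linarith [div_nonneg hs.le (by positivity : 0 ≤ s + exp 1)])]
    linarith
  linarith

lemma csInf_elasticitySet_deriv_zygmund {r : ℝ} (hr : 0 < r) :
    sInf (elasticitySet (deriv (zygmund r))) = r - 1 := by
  rw [elasticitySet_eq_image fun s hs => mul_deriv_deriv_zygmund_div hr.le hs]
  refine csInf_image_Ioi_eq_of_tendsto (fun s (hs : 0 < s) => ?_) ?_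
  · have hL := one_le_log_add_exp_one hs.le
    have ht := div_add_exp_one_lt_one hs.le
    have : 0 ≤ s / (s + exp 1) * (r + 1 - s / (s + exp 1))
        / (r * log (s + exp 1) + s / (s + exp 1)) := by
      apply div_nonneg (mul_nonneg (by positivity) (by linarith))
      nlinarith [div_nonneg hs.le (by positivity : 0 ≤ s + exp 1)]
    linarith
  · have hcont : ContinuousAt (fun s => r - 1 + s / (s + exp 1) * (r + 1 - s / (s + exp 1))
        / (r * log (s + exp 1) + s / (s + exp 1))) 0 := by
      fun_prop (disch := simp [hr.ne'])
    simpa using hcont.tendsto.mono_left nhdsWithin_le_nhds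

lemma bddAbove_elasticitySet_deriv_zygmund_and_csSup_lt {r : ℝ} (hr : 0 < r) :
    BddAbove (elasticitySet (deriv (zygmund r))) ∧
      sSup (elasticitySet (deriv (zygmund r))) < r := by
  rw [elasticitySet_eq_image fun s hs => mul_deriv_deriv_zygmund_div hr.le hs]
  have hfrac : (r + 1) / (2 * r + 1) < 1 := (div_lt_one (by linarith)).2 (by linarith)
  refine bddAbove_image_Ioi_and_csSup_lt (b := r - 1 + (r + 1) / (2 * r + 1))
    (fun s (hs : 0 < s) => ?_) (by linarith)
  have hL := one_add_div_le_log_add_exp_one hs.le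
  have ht₁ := div_add_exp_one_lt_one hs.le
  have ht₀ : 0 ≤ s / (s + exp 1) := by positivity
  generalize s / (s + exp 1) = t at hL ht₀ ht₁ ⊢
  -- with `log (s + e) ≥ 1 + t` the quotient is at most `1 - (r + t²) / (r + (r + 1) t)`
  have : t * (r + 1 - t) / (r * log (s + exp 1) + t) ≤ (r + 1) / (2 * r + 1) := by
    rw [div_le_div_iff₀ (by nlinarith) (by linarith)]
    nlinarith [mul_le_mul_of_nonneg_left hL (by positivity : 0 ≤ r * (r + 1)),
      mul_nonneg (mul_nonneg hr.le (by linarith : 0 ≤ r + 1)) (by linarith : 0 ≤ 1 - t),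
      mul_nonneg (by linarith : 0 ≤ 2 * r + 1) (sq_nonneg t)]
  linarith

theorem zygmund_young_function
    (r : ℝ) (hr : 2 < r)
    (Φ : ℝ → ℝ)
    (hΦ : ∀ s : ℝ, 0 ≤ s → Φ s = s ^ r * Real.log (s + Real.exp 1)) :
    -- Φ is a Young function
    (ConvexOn ℝ (Ici 0) Φ ∧ Φ 0 = 0 ∧
      Tendsto (fun s => Φ s / s) (nhdsWithin 0 (Ioi 0)) (nhds 0) ∧
      Tendsto (fun s => Φ s / s) atTop atTop) ∧
    sInf {x : ℝ | ∃ s ∈ Ioi (0:ℝ), x = s * deriv Φ s / Φ s} = r ∧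
    (BddAbove {x : ℝ | ∃ s ∈ Ioi (0:ℝ), x = s * deriv Φ s / Φ s} ∧
      sSup {x : ℝ | ∃ s ∈ Ioi (0:ℝ), x = s * deriv Φ s / Φ s} < r + 1) ∧
    sInf {x : ℝ | ∃ s ∈ Ioi (0:ℝ), x = s * deriv (deriv Φ) s / deriv Φ s} = r - 1 ∧
    (BddAbove {x : ℝ | ∃ s ∈ Ioi (0:ℝ), x = s * deriv (deriv Φ) s / deriv Φ s} ∧
      sSup {x : ℝ | ∃ s ∈ Ioi (0:ℝ), x = s * deriv (deriv Φ) s / deriv Φ s} < r) := by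
  have hEq : EqOn Φ (zygmund r) (Ioi 0) := fun s hs => hΦ s (le_of_lt hs)
  have hEq' : EqOn (deriv Φ) (deriv (zygmund r)) (Ioi 0) := hEq.deriv isOpen_Ioi
  have hr₀ : 0 < r := by linarith
  refine ⟨(isYoungFunction_zygmund (by linarith)).congr fun s hs => (hΦ s hs).symm, ?_⟩
  change sInf (elasticitySet Φ) = r ∧
    (BddAbove (elasticitySet Φ) ∧ sSup (elasticitySet Φ) < r + 1) ∧
    sInf (elasticitySet (deriv Φ)) = r - 1 ∧
    (BddAbove (elasticitySet (deriv Φ)) ∧ sSup (elasticitySet (deriv Φ)) < r)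
  rw [elasticitySet_congr hEq, elasticitySet_congr hEq']
  exact ⟨csInf_elasticitySet_zygmund r, bddAbove_elasticitySet_zygmund_and_csSup_lt r,
    csInf_elasticitySet_deriv_zygmund hr₀, bddAbove_elasticitySet_deriv_zygmund_and_csSup_lt hr₀⟩
end

section
/- Let Φ(s)=s^p/p, Ψ(s)=s^q/q with 1/p+1/q=1, p ∈ (2,∞), and fix δ > 0. Define 𝔅(u,v) on [0,∞)² by 𝔅(u,v) = u^p/p + v^q/q + (δ/(2−q))·((2/p)u^p + (2/q − 1)v^q) for v ≤ u^{p−1}, and 𝔅(u,v) = u^p/p + v^q/q + (δ/(2−q))·u²v^{2−q} for v > u^{p−1}. Then 𝔅 is continuous on [0,∞)² and C¹ on (0,∞)². -/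
open Set Filter

open Topology Asymptotics in
private lemma glue_hasFDerivAt {f g h : ℝ × ℝ → ℝ} {L : ℝ × ℝ →L[ℝ] ℝ} {x : ℝ × ℝ}
    (hf : HasFDerivAt f L x) (hg : HasFDerivAt g L x)
    (hhx : h x = f x) (hgx : g x = f x)
    (H : ∀ᶠ y in 𝓝 x, h y = f y ∨ h y = g y) :
    HasFDerivAt h L x := by
  rw [hasFDerivAt_iff_isLittleO] at hf hg ⊢
  rw [isLittleO_iff] at hf hg ⊢
  intro c hc
  filter_upwards [hf hc, hg hc, H] with y h1 h2 h3
  rcases h3 with h3 | h3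
  · rw [h3, hhx]; exact h1
  · rw [h3, hhx, ← hgx]; exact h2

private lemma continuousOn_if_le' {α β : Type*} [TopologicalSpace α] [TopologicalSpace β]
    {s : Set α} {f g : α → β} {r t : α → ℝ} [∀ a, Decidable (r a ≤ t a)]
    (hr : Continuous r) (ht : Continuous t)
    (hf : ContinuousOn f s) (hg : ContinuousOn g s)
    (he : ∀ a ∈ s, r a = t a → f a = g a) :
    ContinuousOn (fun a => if r a ≤ t a then f a else g a) s :=
  ContinuousOn.if (fun a ha => he a ha.1 (frontier_le_subset_eq hr ht ha.2))
    (hf.mono inter_subset_left) (hg.mono inter_subset_left)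

set_option maxHeartbeats 1000000 in
theorem nazarov_treil_bellman_smoothness
    (p q δ : ℝ) (hp : 2 < p) (hpq : 1 / p + 1 / q = 1) (hδ : 0 < δ)
    (B : ℝ → ℝ → ℝ)
    (hB1 : ∀ u v : ℝ, 0 ≤ u → 0 ≤ v → v ≤ u ^ (p - 1) →
      B u v = u ^ p / p + v ^ q / q
        + (δ / (2 - q)) * ((2 / p) * u ^ p + (2 / q - 1) * v ^ q))
    (hB2 : ∀ u v : ℝ, 0 ≤ u → 0 ≤ v → u ^ (p - 1) < v →
      B u v = u ^ p / p + v ^ q / q + (δ / (2 - q)) * (u ^ 2 * v ^ (2 - q))) :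
    ContinuousOn (fun x : ℝ × ℝ => B x.1 x.2) (Ici 0 ×ˢ Ici 0) ∧
    ContDiffOn ℝ 1 (fun x : ℝ × ℝ => B x.1 x.2) (Ioi 0 ×ˢ Ioi 0) := by
  classical
  have hp0 : 0 < p := by linarith
  have hpne : p ≠ 0 := hp0.ne'
  have hqne : q ≠ 0 := by
    intro h
    rw [h, div_zero, add_zero] at hpq
    have : p = 1 := by field_simp at hpq; linarith
    linarith
  have hkey : q + p = p * q := by field_simp at hpq; linarith
  have hq1 : 1 < q := by nlinarith
  have hq0 : 0 < q := by linarith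
  have hq2 : q < 2 := by nlinarith
  have h2q : 0 < 2 - q := by linarith
  have h2qne : (2 : ℝ) - q ≠ 0 := h2q.ne'
  have e1 : (p - 1) * q = p := by nlinarith
  have e2 : (p - 1) * (2 - q) = p - 2 := by nlinarith
  have e3 : (p - 1) * (q - 1) = 1 := by nlinarith
  have e4 : (p - 1) * (1 - q) = -1 := by nlinarith
  have hp1 : 0 < p - 1 := by linarith
  -- curve identities for positive u
  have curve_vq : ∀ u : ℝ, 0 < u → (u ^ (p - 1)) ^ q = u ^ p := by
    intro u hu
    rw [← Real.rpow_mul hu.le, e1]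
  have hpow2 : ∀ u : ℝ, 0 < u → u ^ (2 : ℕ) = u ^ (2 : ℝ) := by
    intro u hu
    rw [← Real.rpow_natCast u 2]; norm_num
  have curve_u2v : ∀ u : ℝ, 0 < u → u ^ (2 : ℕ) * (u ^ (p - 1)) ^ (2 - q) = u ^ p := by
    intro u hu
    rw [← Real.rpow_mul hu.le, e2, hpow2 u hu, ← Real.rpow_add hu]
    ring_nf
  have curve_uv2q : ∀ u : ℝ, 0 < u → u * (u ^ (p - 1)) ^ (2 - q) = u ^ (p - 1) := by
    intro u hu
    rw [← Real.rpow_mul hu.le, e2]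
    nth_rewrite 1 [← Real.rpow_one u]
    rw [← Real.rpow_add hu]
    ring_nf
  have curve_u2v1q : ∀ u : ℝ, 0 < u →
      u ^ (2 : ℕ) * (u ^ (p - 1)) ^ (1 - q) = (u ^ (p - 1)) ^ (q - 1) := by
    intro u hu
    rw [← Real.rpow_mul hu.le, ← Real.rpow_mul hu.le, e4, e3, Real.rpow_one, hpow2 u hu,
      ← Real.rpow_add hu]
    norm_num
  -- abbreviations for the two smooth pieces
  obtain ⟨a, ha⟩ : ∃ a : ℝ, a = 1 / p + (δ / (2 - q)) * (2 / p) := ⟨_, rfl⟩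
  obtain ⟨b, hb⟩ : ∃ b : ℝ, b = 1 / q + (δ / (2 - q)) * (2 / q - 1) := ⟨_, rfl⟩
  obtain ⟨c, hc⟩ : ∃ c : ℝ, c = δ / (2 - q) := ⟨_, rfl⟩
  set F : ℝ × ℝ → ℝ := fun y => a * y.1 ^ p + b * y.2 ^ q with hF
  set G : ℝ × ℝ → ℝ := fun y => (1 / p) * y.1 ^ p + (1 / q) * y.2 ^ q
      + c * (y.1 ^ 2 * y.2 ^ (2 - q)) with hG
  have h2pq : 2 / p + 2 / q = 2 := by field_simp at hpq ⊢; linarith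
  have hab : a + b = 1 / p + 1 / q + c := by
    rw [ha, hb, hc]; linear_combination (δ / (2 - q)) * h2pq
  have hap : a * p = 1 + 2 * c := by rw [ha, hc]; field_simp
  have hbq : b * q = 1 + c * (2 - q) := by rw [hb, hc]; field_simp
  -- B agrees with F below the curve and with G above it, on the closed quadrant
  have hBF : ∀ y : ℝ × ℝ, 0 ≤ y.1 → 0 ≤ y.2 → y.2 ≤ y.1 ^ (p - 1) → B y.1 y.2 = F y := by
    intro y h1 h2 h3
    rw [hB1 y.1 y.2 h1 h2 h3, hF]
    dsimp only
    rw [ha, hb]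
    field_simp
    ring
  have hBG : ∀ y : ℝ × ℝ, 0 ≤ y.1 → 0 ≤ y.2 → y.1 ^ (p - 1) < y.2 → B y.1 y.2 = G y := by
    intro y h1 h2 h3
    rw [hB2 y.1 y.2 h1 h2 h3, hG]
    dsimp only
    rw [hc]
    ring
  -- F = G on the critical curve (closed quadrant)
  have hFG : ∀ y : ℝ × ℝ, 0 ≤ y.1 → y.2 = y.1 ^ (p - 1) → F y = G y := by
    intro y h1 h2
    rcases eq_or_lt_of_le h1 with h1' | h1'
    · have hy1 : y.1 = 0 := h1'.symm
      have hy2 : y.2 = 0 := by rw [h2, hy1, Real.zero_rpow hp1.ne']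
      rw [hF, hG]
      dsimp only
      rw [hy1, hy2, Real.zero_rpow hpne, Real.zero_rpow hqne, Real.zero_rpow h2qne]
      ring
    · rw [hF, hG]
      dsimp only
      rw [h2, curve_vq y.1 h1', curve_u2v y.1 h1']
      linear_combination (y.1 ^ p) * hab
  -- scalar identities for the derivatives on the curve
  have sd1 : ∀ y : ℝ × ℝ, 0 < y.1 → y.2 = y.1 ^ (p - 1) →
      y.1 ^ (p - 1) + (2 * c) * (y.1 * y.2 ^ (2 - q)) = (a * p) * y.1 ^ (p - 1) := by
    intro y h1 h2
    rw [h2, curve_uv2q y.1 h1]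
    linear_combination (-(y.1 ^ (p - 1))) * hap
  have sd2 : ∀ y : ℝ × ℝ, 0 < y.1 → y.2 = y.1 ^ (p - 1) →
      y.2 ^ (q - 1) + c * (2 - q) * (y.1 ^ 2 * y.2 ^ (1 - q)) = (b * q) * y.2 ^ (q - 1) := by
    intro y h1 h2
    rw [h2, curve_u2v1q y.1 h1]
    linear_combination (-((y.1 ^ (p - 1)) ^ (q - 1))) * hbq
  -- derivatives of F and G on the open quadrant
  set fstL := ContinuousLinearMap.fst ℝ ℝ ℝ with hfstL
  set sndL := ContinuousLinearMap.snd ℝ ℝ ℝ with hsndL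
  set LF : ℝ × ℝ → (ℝ × ℝ →L[ℝ] ℝ) :=
    fun x => ((a * p) * x.1 ^ (p - 1)) • fstL + ((b * q) * x.2 ^ (q - 1)) • sndL with hLF
  set LG : ℝ × ℝ → (ℝ × ℝ →L[ℝ] ℝ) :=
    fun x => (x.1 ^ (p - 1) + (2 * c) * (x.1 * x.2 ^ (2 - q))) • fstL
      + (x.2 ^ (q - 1) + c * (2 - q) * (x.1 ^ 2 * x.2 ^ (1 - q))) • sndL with hLG
  have hFd : ∀ x : ℝ × ℝ, 0 < x.1 → 0 < x.2 → HasFDerivAt F (LF x) x := by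
    intro x hx1 hx2
    have hu := (Real.hasDerivAt_rpow_const (x := x.1) (p := p)
      (Or.inl hx1.ne')).comp_hasFDerivAt (𝕜 := ℝ) x hasFDerivAt_fst
    have hv := (Real.hasDerivAt_rpow_const (x := x.2) (p := q)
      (Or.inl hx2.ne')).comp_hasFDerivAt (𝕜 := ℝ) x hasFDerivAt_snd
    have h := (hu.const_mul a).add (hv.const_mul b)
    have heq : a • ((p * x.1 ^ (p - 1)) • fstL) + b • ((q * x.2 ^ (q - 1)) • sndL) = LF x := by
      rw [hLF, hfstL, hsndL]
      ext y <;> simp <;> ring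
    rw [heq] at h
    exact h
  have hGd : ∀ x : ℝ × ℝ, 0 < x.1 → 0 < x.2 → HasFDerivAt G (LG x) x := by
    intro x hx1 hx2
    have hu := (Real.hasDerivAt_rpow_const (x := x.1) (p := p)
      (Or.inl hx1.ne')).comp_hasFDerivAt (𝕜 := ℝ) x hasFDerivAt_fst
    have hv := (Real.hasDerivAt_rpow_const (x := x.2) (p := q)
      (Or.inl hx2.ne')).comp_hasFDerivAt (𝕜 := ℝ) x hasFDerivAt_snd
    have hu2 := (hasDerivAt_pow 2 x.1).comp_hasFDerivAt (𝕜 := ℝ) x hasFDerivAt_fst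
    have hv2 := (Real.hasDerivAt_rpow_const (x := x.2) (p := 2 - q)
      (Or.inl hx2.ne')).comp_hasFDerivAt (𝕜 := ℝ) x hasFDerivAt_snd
    rw [show (2 : ℝ) - q - 1 = 1 - q by ring] at hv2
    have h := ((hu.const_mul (1 / p)).add (hv.const_mul (1 / q))).add
      ((hu2.mul hv2).const_mul c)
    refine h.congr_fderiv ?_
    rw [hLG, hfstL, hsndL]
    ext y <;> simp <;> field_simp <;> ring
  -- the glued derivative candidate
  set D : ℝ × ℝ → (ℝ × ℝ →L[ℝ] ℝ) :=
    fun x => if x.2 ≤ x.1 ^ (p - 1) then LF x else LG x with hD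
  have hopen : IsOpen (Ioi (0 : ℝ) ×ˢ Ioi (0 : ℝ)) := isOpen_Ioi.prod isOpen_Ioi
  have hcont_curve : Continuous fun y : ℝ × ℝ => y.1 ^ (p - 1) :=
    continuous_fst.rpow_const fun _ => Or.inr hp1.le
  -- B has derivative D x at every point of the open quadrant
  have hBD : ∀ x ∈ Ioi (0 : ℝ) ×ˢ Ioi (0 : ℝ),
      HasFDerivAt (fun y : ℝ × ℝ => B y.1 y.2) (D x) x := by
    intro x hx
    obtain ⟨hx1, hx2⟩ := hx
    rcases lt_trichotomy x.2 (x.1 ^ (p - 1)) with hlt | heq | hgt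
    · have hDx : D x = LF x := by rw [hD]; exact if_pos hlt.le
      rw [hDx]
      apply (hFd x hx1 hx2).congr_of_eventuallyEq
      have hU : IsOpen ((Ioi (0 : ℝ) ×ˢ Ioi (0 : ℝ)) ∩ {y : ℝ × ℝ | y.2 < y.1 ^ (p - 1)}) :=
        hopen.inter (isOpen_lt continuous_snd hcont_curve)
      filter_upwards [hU.mem_nhds ⟨⟨hx1, hx2⟩, hlt⟩] with y hy
      exact hBF y (le_of_lt hy.1.1) (le_of_lt hy.1.2) hy.2.le
    · have hDx : D x = LF x := by rw [hD]; exact if_pos heq.le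
      rw [hDx]
      have hGd' : HasFDerivAt G (LF x) x := by
        have h := hGd x hx1 hx2
        have : LG x = LF x := by
          rw [hLG, hLF]
          dsimp only
          rw [sd1 x hx1 heq, sd2 x hx1 heq]
        rwa [this] at h
      refine glue_hasFDerivAt (hFd x hx1 hx2) hGd' ?_ ?_ ?_
      · exact hBF x hx1.le hx2.le heq.le
      · exact (hFG x hx1.le heq).symm
      · filter_upwards [hopen.mem_nhds ⟨hx1, hx2⟩] with y hy
        by_cases hcase : y.2 ≤ y.1 ^ (p - 1)
        · exact Or.inl (hBF y hy.1.le hy.2.le hcase)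
        · exact Or.inr (hBG y hy.1.le hy.2.le (not_le.1 hcase))
    · have hDx : D x = LG x := by rw [hD]; exact if_neg (not_le.2 hgt)
      rw [hDx]
      apply (hGd x hx1 hx2).congr_of_eventuallyEq
      have hU : IsOpen ((Ioi (0 : ℝ) ×ˢ Ioi (0 : ℝ)) ∩ {y : ℝ × ℝ | y.1 ^ (p - 1) < y.2}) :=
        hopen.inter (isOpen_lt hcont_curve continuous_snd)
      filter_upwards [hU.mem_nhds ⟨⟨hx1, hx2⟩, hgt⟩] with y hy
      exact hBG y (le_of_lt hy.1.1) (le_of_lt hy.1.2) hy.2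
  -- continuity of the glued derivative on the open quadrant
  have hLFc : ContinuousOn LF (Ioi (0 : ℝ) ×ˢ Ioi (0 : ℝ)) := by
    rw [hLF]
    exact ((continuous_const.mul hcont_curve).continuousOn.smul continuousOn_const).add
      ((continuous_const.mul (continuous_snd.rpow_const fun _ =>
        Or.inr (by linarith : (0:ℝ) ≤ q - 1))).continuousOn.smul continuousOn_const)
  have hneg : ContinuousOn (fun y : ℝ × ℝ => y.2 ^ (1 - q)) (Ioi (0 : ℝ) ×ˢ Ioi (0 : ℝ)) := by
    intro y hy
    exact ((Real.continuousAt_rpow_const y.2 (1 - q)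
      (Or.inl hy.2.ne')).comp continuous_snd.continuousAt).continuousWithinAt
  have hLGc : ContinuousOn LG (Ioi (0 : ℝ) ×ˢ Ioi (0 : ℝ)) := by
    rw [hLG]
    exact ((hcont_curve.continuousOn.add (continuous_const.mul (continuous_fst.mul
        (continuous_snd.rpow_const fun _ => Or.inr h2q.le))).continuousOn).smul
        continuousOn_const).add
      ((((continuous_snd.rpow_const fun _ =>
        Or.inr (by linarith : (0:ℝ) ≤ q - 1)).continuousOn).add
        (continuousOn_const.mul ((continuous_fst.pow 2).continuousOn.mul hneg))).smul
        continuousOn_const)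
  have hDc : ContinuousOn D (Ioi (0 : ℝ) ×ˢ Ioi (0 : ℝ)) := by
    rw [hD]
    apply continuousOn_if_le' continuous_snd hcont_curve hLFc hLGc
    intro y hy hcurve
    rw [hLF, hLG]
    dsimp only
    rw [sd1 y hy.1 hcurve, sd2 y hy.1 hcurve]
  constructor
  · -- continuity on the closed quadrant
    have hFc : Continuous F := by
      rw [hF]
      exact (continuous_const.mul (continuous_fst.rpow_const fun _ => Or.inr hp0.le)).add
        (continuous_const.mul (continuous_snd.rpow_const fun _ => Or.inr hq0.le))
    have hGc : Continuous G := by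
      rw [hG]
      refine ((continuous_const.mul (continuous_fst.rpow_const fun _ => Or.inr hp0.le)).add
        (continuous_const.mul (continuous_snd.rpow_const fun _ => Or.inr hq0.le))).add ?_
      exact continuous_const.mul ((continuous_fst.pow 2).mul
        (continuous_snd.rpow_const fun _ => Or.inr h2q.le))
    have hglue : ContinuousOn (fun y : ℝ × ℝ => if y.2 ≤ y.1 ^ (p - 1) then F y else G y)
        (Ici (0 : ℝ) ×ˢ Ici (0 : ℝ)) := by
      apply continuousOn_if_le' continuous_snd hcont_curve hFc.continuousOn hGc.continuousOn
      intro y hy hcurve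
      exact hFG y hy.1 hcurve
    apply hglue.congr
    intro y hy
    dsimp only
    by_cases hcase : y.2 ≤ y.1 ^ (p - 1)
    · rw [if_pos hcase]; exact hBF y hy.1 hy.2 hcase
    · rw [if_neg hcase]; exact hBG y hy.1 hy.2 (not_le.1 hcase)
  · -- C¹ smoothness on the open quadrant
    rw [← zero_add (1 : WithTop ℕ∞), contDiffOn_succ_iff_fderiv_of_isOpen hopen]
    refine ⟨fun x hx => ((hBD x hx).differentiableAt).differentiableWithinAt, by simp, ?_⟩
    rw [contDiffOn_zero]
    exact hDc.congr fun x hx => (hBD x hx).fderiv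
end

section
/- Let Φ, Ψ be mutually complementary Young functions satisfying: C¹ on [0,∞), C² on (0,∞), Φ'',Ψ''>0 on (0,∞), Φ' strictly convex with Φ'(s)/s→0 at 0+, M := sup sΦ'(s)/Φ(s) < ∞, and 1 < m̃ := inf sΦ''(s)/Φ'(s) ≤ M̃ := sup sΦ''(s)/Φ'(s) < ∞. Fix δ ∈ (0, (m̃−1)/(100 m̃)]. Define 𝔛: ℂ² → [0,∞) by 𝔛(u,v) = (1+δ)(Φ(|u|)+Ψ(|v|)) + δ|u|²∫_0^{|u|} Φ'(s)/s² ds when |v| ≤ Φ'(|u|), and 𝔛(u,v) = Φ(|u|)+Ψ(|v|) + δ|u|²∫_0^{|v|} ds/Ψ'(s) when |v| > Φ'(|u|). Then 𝔛(u,v) ≤ 2·max{1, M/m̃}·(Φ(|u|) + Ψ(|v|)) for all (u,v) ∈ ℂ². -/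
open Set Filter MeasureTheory Topology

/-!
The δ-terms of 𝔛 are controlled by power-type integral bounds. Differentiating `Φ'(s)/s` and
using `s Φ''(s) ≥ m̃ Φ'(s)` gives `(m̃ - 1) ∫₀ᵃ Φ'(s)/s² ds ≤ Φ'(a)/a`, which together with
`a Φ'(a) ≤ M Φ(a)` handles the region `|v| ≤ Φ'(|u|)`. The supporting lines of the Legendre
transform show `Ψ' = (Φ')⁻¹`, so `s Ψ''(s) ≤ Ψ'(s)/m̃` and, differentiating `s/Ψ'(s)`,
`(1 - 1/m̃) ∫₀ᵇ ds/Ψ'(s) ≤ b/Ψ'(b)`. In the region `|v| > Φ'(|u|)` we also have `|u| < Ψ'(|v|)`,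
so the δ-term is at most `δ |u| |v| / (1 - 1/m̃)`, and Young's inequality
`|u| |v| ≤ Φ(|u|) + Ψ(|v|)` finishes. The choice of `δ` makes each δ-term at most a
hundredth of `max 1 (M/m̃) (Φ(|u|) + Ψ(|v|))`.
-/

lemma ConvexOn.add_mul_sub_le_of_hasDerivAt {S : Set ℝ} {f : ℝ → ℝ} {f' x y : ℝ}
    (hf : ConvexOn ℝ S f) (hx : x ∈ S) (hy : y ∈ S) (hfx : HasDerivAt f f' x) :
    f x + f' * (y - x) ≤ f y := by
  rcases lt_trichotomy x y with hxy | rfl | hxy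
  · have := hf.le_slope_of_hasDerivAt hx hy hxy hfx
    rw [slope_def_field, le_div_iff₀ (sub_pos.2 hxy)] at this
    linarith
  · simp
  · have := hf.slope_le_of_hasDerivAt hy hx hxy hfx
    rw [slope_def_field, div_le_iff₀ (sub_pos.2 hxy)] at this
    linarith

lemma StrictMonoOn.lt_of_tendsto_nhdsGT {f : ℝ → ℝ} {a b x : ℝ} (hf : StrictMonoOn f (Ioi a))
    (hlim : Tendsto f (𝓝[>] a) (𝓝 b)) (hx : a < x) : b < f x := by
  obtain ⟨y, hay, hyx⟩ := exists_between hx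
  have hby : b ≤ f y := le_of_tendsto hlim <| by
    filter_upwards [Ioo_mem_nhdsGT hay] with t ht
    exact (hf ht.1 hay ht.2).le
  exact hby.trans_lt (hf hay hx hyx)

lemma setIntegral_Ioc_zero_le_of_le_deriv {F F' g : ℝ → ℝ} {u : ℝ} (hu : 0 < u)
    (hF : ∀ s ∈ Ioc 0 u, HasDerivAt F (F' s) s) (hg : ContinuousOn g (Ioc 0 u))
    (hgF : ∀ s ∈ Ioc 0 u, g s ≤ F' s) (hF0 : ∀ s ∈ Ioc 0 u, 0 ≤ F s) :
    ∫ s in Ioc 0 u, g s ≤ F u := by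
  by_cases hint : IntegrableOn g (Ioc 0 u)
  swap
  · rw [integral_undef hint]
    exact hF0 u ⟨hu, le_rfl⟩
  have hprim : Tendsto (fun ε => ∫ s in ε..u, g s) (𝓝[>] 0) (𝓝 (∫ s in Ioc 0 u, g s)) := by
    rw [← intervalIntegral.integral_of_le hu.le, ← nhdsWithin_Ioo_eq_nhdsGT hu]
    have hcont := intervalIntegral.continuousOn_primitive_interval_left (μ := volume) (f := g)
      (by rwa [uIcc_of_le hu.le, integrableOn_Icc_iff_integrableOn_Ioc])
    rw [uIcc_of_le hu.le] at hcont
    exact ((hcont 0 (left_mem_Icc.2 hu.le)).mono Ioo_subset_Icc_self).tendsto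
  refine le_of_tendsto hprim ?_
  filter_upwards [Ioo_mem_nhdsGT hu] with ε hε
  have hsub : Icc ε u ⊆ Ioc 0 u := Icc_subset_Ioc hε.1 le_rfl
  calc ∫ s in ε..u, g s ≤ F u - F ε :=
        intervalIntegral.integral_le_sub_of_hasDeriv_right_of_le hε.2.le
          (fun s hs => (hF s (hsub hs)).continuousAt.continuousWithinAt)
          (fun s hs => (hF s (hsub (Ioo_subset_Icc_self hs))).hasDerivWithinAt)
          (hg.mono hsub).integrableOn_Icc
          (fun s hs => hgF s (hsub (Ioo_subset_Icc_self hs)))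
    _ ≤ F u := sub_le_self _ (hF0 ε (hsub (left_mem_Icc.2 hε.2.le)))

lemma mul_integral_div_sq_le {f f' : ℝ → ℝ} {c u : ℝ} (hu : 0 < u)
    (hf : ∀ s ∈ Ioc 0 u, HasDerivAt f (f' s) s) (hf0 : ∀ s ∈ Ioc 0 u, 0 ≤ f s)
    (hc : ∀ s ∈ Ioc 0 u, c * f s ≤ s * f' s) :
    (c - 1) * ∫ s in Ioc 0 u, f s / s ^ 2 ≤ f u / u := by
  rw [← integral_const_mul]
  refine setIntegral_Ioc_zero_le_of_le_deriv (F := fun s => f s / s) hu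
    (fun s hs => (hf s hs).div (hasDerivAt_id s) hs.1.ne') ?_ ?_
    (fun s hs => div_nonneg (hf0 s hs) hs.1.le)
  · exact continuousOn_const.mul <|
      ContinuousOn.div (fun s hs => (hf s hs).continuousAt.continuousWithinAt)
        (continuousOn_pow 2) fun s hs => pow_ne_zero 2 hs.1.ne'
  · intro s hs
    rw [mul_div_assoc', div_le_div_iff_of_pos_right (pow_pos hs.1 2)]
    linarith [hc s hs]

lemma mul_integral_inv_le {f f' : ℝ → ℝ} {c u : ℝ} (hu : 0 < u)
    (hf : ∀ s ∈ Ioc 0 u, HasDerivAt f (f' s) s) (hf0 : ∀ s ∈ Ioc 0 u, 0 < f s)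
    (hc : ∀ s ∈ Ioc 0 u, s * f' s ≤ c * f s) :
    (1 - c) * ∫ s in Ioc 0 u, (f s)⁻¹ ≤ u / f u := by
  rw [← integral_const_mul]
  refine setIntegral_Ioc_zero_le_of_le_deriv (F := fun s => s / f s) hu
    (fun s hs => (hasDerivAt_id s).div (hf s hs) (hf0 s hs).ne') ?_ ?_
    (fun s hs => div_nonneg hs.1.le (hf0 s hs).le)
  · exact continuousOn_const.mul <|
      ContinuousOn.inv₀ (fun s hs => (hf s hs).continuousAt.continuousWithinAt)
        fun s hs => (hf0 s hs).ne'
  · intro s hs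
    have hfs := hf0 s hs
    rw [← div_eq_mul_inv, div_le_div_iff₀ hfs (pow_pos hfs 2)]
    dsimp only [id]
    nlinarith [hc s hs]

structure IsRegularNFunction (Φ : ℝ → ℝ) : Prop where
  convexOn : ConvexOn ℝ (Ici 0) Φ
  map_zero : Φ 0 = 0
  contDiffOn_Ici : ContDiffOn ℝ 1 Φ (Ici 0)
  contDiffOn_Ioi : ContDiffOn ℝ 2 Φ (Ioi 0)
  deriv_deriv_pos : ∀ s ∈ Ioi (0 : ℝ), 0 < deriv (deriv Φ) s
  tendsto_deriv_div : Tendsto (fun s => deriv Φ s / s) (𝓝[>] 0) (𝓝 0)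
  tendsto_div_atTop : Tendsto (fun s => Φ s / s) atTop atTop

noncomputable def youngConj (Φ : ℝ → ℝ) (t : ℝ) : ℝ := sSup ((fun s => s * t - Φ s) '' Ioi 0)

namespace IsRegularNFunction

variable {Φ Ψ : ℝ → ℝ} {s t : ℝ}

lemma hasDerivAt (hΦ : IsRegularNFunction Φ) (hs : 0 < s) : HasDerivAt Φ (deriv Φ s) s :=
  ((hΦ.contDiffOn_Ici.differentiableOn one_ne_zero).differentiableAt (Ici_mem_nhds hs)).hasDerivAt

lemma hasDerivAt_deriv (hΦ : IsRegularNFunction Φ) (hs : 0 < s) :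
    HasDerivAt (deriv Φ) (deriv (deriv Φ) s) s :=
  (((hΦ.contDiffOn_Ioi.deriv_of_isOpen isOpen_Ioi (m := 1) le_rfl).differentiableOn
    one_ne_zero).differentiableAt (Ioi_mem_nhds hs)).hasDerivAt

lemma strictMonoOn_deriv (hΦ : IsRegularNFunction Φ) : StrictMonoOn (deriv Φ) (Ioi 0) :=
  strictMonoOn_of_deriv_pos (convex_Ioi 0)
    (fun _ hs => (hΦ.hasDerivAt_deriv hs).continuousAt.continuousWithinAt)
    (by simpa only [interior_Ioi] using hΦ.deriv_deriv_pos)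

lemma tendsto_deriv (hΦ : IsRegularNFunction Φ) : Tendsto (deriv Φ) (𝓝[>] 0) (𝓝 0) := by
  have h := (tendsto_nhdsWithin_of_tendsto_nhds (tendsto_id (x := 𝓝 (0 : ℝ)))).mul
    hΦ.tendsto_deriv_div
  rw [zero_mul] at h
  refine h.congr' ?_
  filter_upwards [self_mem_nhdsWithin] with s (hs : 0 < s)
  exact mul_div_cancel₀ _ hs.ne'

lemma deriv_pos (hΦ : IsRegularNFunction Φ) (hs : 0 < s) : 0 < deriv Φ s :=
  hΦ.strictMonoOn_deriv.lt_of_tendsto_nhdsGT hΦ.tendsto_deriv hs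

lemma strictMonoOn (hΦ : IsRegularNFunction Φ) : StrictMonoOn Φ (Ici 0) :=
  strictMonoOn_of_deriv_pos (convex_Ici 0) hΦ.contDiffOn_Ici.continuousOn
    (by simpa only [interior_Ici] using fun _ (hs : _ ∈ Ioi 0) => hΦ.deriv_pos hs)

lemma pos (hΦ : IsRegularNFunction Φ) (hs : 0 < s) : 0 < Φ s :=
  hΦ.map_zero ▸ hΦ.strictMonoOn self_mem_Ici hs.le hs

lemma nonneg (hΦ : IsRegularNFunction Φ) (hs : 0 ≤ s) : 0 ≤ Φ s :=
  hΦ.map_zero ▸ hΦ.strictMonoOn.monotoneOn self_mem_Ici hs hs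

lemma add_deriv_mul_sub_le (hΦ : IsRegularNFunction Φ) (hs : 0 < s) (ht : 0 ≤ t) :
    Φ s + deriv Φ s * (t - s) ≤ Φ t :=
  hΦ.convexOn.add_mul_sub_le_of_hasDerivAt hs.le ht (hΦ.hasDerivAt hs)

lemma le_mul_deriv (hΦ : IsRegularNFunction Φ) (hs : 0 < s) : Φ s ≤ s * deriv Φ s := by
  have := hΦ.add_deriv_mul_sub_le hs le_rfl
  rw [hΦ.map_zero] at this
  linarith

lemma exists_deriv_eq (hΦ : IsRegularNFunction Φ) (ht : 0 < t) : ∃ s > 0, deriv Φ s = t := by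
  obtain ⟨ε, hεt, hε⟩ :=
    ((hΦ.tendsto_deriv.eventually_lt_const ht).and self_mem_nhdsWithin).exists
  obtain ⟨T, hTt, hεT⟩ :=
    ((hΦ.tendsto_div_atTop.eventually_ge_atTop t).and (eventually_ge_atTop ε)).exists
  have hT : 0 < T := lt_of_lt_of_le hε hεT
  have htT : t ≤ deriv Φ T :=
    hTt.trans ((div_le_iff₀' hT).2 (hΦ.le_mul_deriv hT))
  obtain ⟨s, hs, rfl⟩ := intermediate_value_Icc hεT
    (fun x hx => (hΦ.hasDerivAt_deriv (lt_of_lt_of_le hε hx.1)).continuousAt.continuousWithinAt)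
    ⟨hεt.le, htT⟩
  exact ⟨s, lt_of_lt_of_le hε hs.1, rfl⟩

lemma mul_deriv_le_of_eq_sSup (hΦ : IsRegularNFunction Φ) {M : ℝ}
    (hM : M = sSup {x : ℝ | ∃ s ∈ Ioi (0 : ℝ), x = s * deriv Φ s / Φ s})
    (hMbdd : BddAbove {x : ℝ | ∃ s ∈ Ioi (0 : ℝ), x = s * deriv Φ s / Φ s}) (hs : 0 < s) :
    s * deriv Φ s ≤ M * Φ s := by
  rw [← div_le_iff₀ (hΦ.pos hs), hM]
  exact le_csSup hMbdd ⟨s, hs, rfl⟩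

lemma mul_deriv_le_mul_deriv_deriv_of_eq_sInf (hΦ : IsRegularNFunction Φ) {m : ℝ}
    (hm : m = sInf {x : ℝ | ∃ s ∈ Ioi (0 : ℝ), x = s * deriv (deriv Φ) s / deriv Φ s})
    (hs : 0 < s) : m * deriv Φ s ≤ s * deriv (deriv Φ) s := by
  rw [← le_div_iff₀ (hΦ.deriv_pos hs), hm]
  refine csInf_le ⟨0, ?_⟩ ⟨s, hs, rfl⟩
  rintro _ ⟨r, hr, rfl⟩
  exact (div_pos (mul_pos hr (hΦ.deriv_deriv_pos r hr)) (hΦ.deriv_pos hr)).le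

lemma isGreatest_mul_deriv_sub (hΦ : IsRegularNFunction Φ) (hs : 0 < s) :
    IsGreatest ((fun r => r * deriv Φ s - Φ r) '' Ioi 0) (s * deriv Φ s - Φ s) := by
  refine ⟨⟨s, hs, rfl⟩, ?_⟩
  rintro _ ⟨r, hr, rfl⟩
  linarith [hΦ.add_deriv_mul_sub_le hs (le_of_lt hr)]

lemma youngConj_deriv (hΦ : IsRegularNFunction Φ) (hs : 0 < s) :
    youngConj Φ (deriv Φ s) = s * deriv Φ s - Φ s :=
  (hΦ.isGreatest_mul_deriv_sub hs).csSup_eq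

lemma mul_sub_le_youngConj (hΦ : IsRegularNFunction Φ) (hs : 0 < s) (ht : 0 ≤ t) :
    s * t - Φ s ≤ youngConj Φ t := by
  -- the supporting line of slope `t + 1 > 0` bounds the set from above
  obtain ⟨r, hr, hrt⟩ := hΦ.exists_deriv_eq (by linarith : 0 < t + 1)
  refine le_csSup ⟨r * (t + 1) - Φ r, ?_⟩ ⟨s, hs, rfl⟩
  rintro _ ⟨q, hq, rfl⟩
  have := (hΦ.isGreatest_mul_deriv_sub hr).2 ⟨q, hq, rfl⟩
  rw [hrt] at this
  dsimp only at this ⊢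
  nlinarith [mem_Ioi.1 hq]

lemma youngConj_nonneg (hΦ : IsRegularNFunction Φ) (ht : 0 ≤ t) : 0 ≤ youngConj Φ t := by
  have hlim : Tendsto (fun s => s * t - Φ s) (𝓝[>] 0) (𝓝 0) := by
    have hcont : ContinuousWithinAt (fun s => s * t - Φ s) (Ici 0) 0 :=
      (continuousWithinAt_id.mul continuousWithinAt_const).sub
        (hΦ.contDiffOn_Ici.continuousOn 0 self_mem_Ici)
    simpa [hΦ.map_zero] using (hcont.mono Ioi_subset_Ici_self).tendsto
  refine le_of_tendsto hlim ?_
  filter_upwards [self_mem_nhdsWithin] with s hs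
  exact hΦ.mul_sub_le_youngConj hs ht

lemma mul_le_add_youngConj (hΦ : IsRegularNFunction Φ) (hs : 0 ≤ s) (ht : 0 ≤ t) :
    s * t ≤ Φ s + youngConj Φ t := by
  rcases hs.eq_or_lt with rfl | hs
  · simpa [hΦ.map_zero] using hΦ.youngConj_nonneg ht
  · linarith [hΦ.mul_sub_le_youngConj hs ht]

lemma deriv_conj_deriv (hΦ : IsRegularNFunction Φ) (hΨ : ∀ t, 0 ≤ t → Ψ t = youngConj Φ t)
    (hΨ1 : ContDiffOn ℝ 1 Ψ (Ici 0)) (hs : 0 < s) : deriv Ψ (deriv Φ s) = s := by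
  have ht : 0 < deriv Φ s := hΦ.deriv_pos hs
  -- Ψ lies above the line t ↦ s * t - Φ s and touches it at Φ' s
  have hmin : IsLocalMin (fun t => Ψ t - (s * t - Φ s)) (deriv Φ s) := by
    filter_upwards [Ici_mem_nhds ht] with t (ht' : 0 ≤ t)
    rw [hΨ _ ht.le, hΨ t ht', hΦ.youngConj_deriv hs]
    linarith [hΦ.mul_sub_le_youngConj hs ht']
  have hd : HasDerivAt (fun t => Ψ t - (s * t - Φ s)) (deriv Ψ (deriv Φ s) - s * 1) (deriv Φ s) :=
    ((hΨ1.differentiableOn one_ne_zero).differentiableAt (Ici_mem_nhds ht)).hasDerivAt.sub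
      (((hasDerivAt_id _).const_mul s).sub_const (Φ s))
  linarith [hmin.hasDerivAt_eq_zero hd]

lemma deriv_conj_pos (hΦ : IsRegularNFunction Φ) (hΨ : ∀ t, 0 ≤ t → Ψ t = youngConj Φ t)
    (hΨ1 : ContDiffOn ℝ 1 Ψ (Ici 0)) (ht : 0 < t) : 0 < deriv Ψ t := by
  obtain ⟨s, hs, rfl⟩ := hΦ.exists_deriv_eq ht
  rwa [hΦ.deriv_conj_deriv hΨ hΨ1 hs]

lemma deriv_deriv_conj (hΦ : IsRegularNFunction Φ) (hΨ : ∀ t, 0 ≤ t → Ψ t = youngConj Φ t)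
    (hΨ1 : ContDiffOn ℝ 1 Ψ (Ici 0)) (ht : 0 < t) : deriv Φ (deriv Ψ t) = t := by
  obtain ⟨s, hs, rfl⟩ := hΦ.exists_deriv_eq ht
  rw [hΦ.deriv_conj_deriv hΨ hΨ1 hs]

lemma hasDerivAt_deriv_conj (hΦ : IsRegularNFunction Φ) (hΨ : ∀ t, 0 ≤ t → Ψ t = youngConj Φ t)
    (hΨ1 : ContDiffOn ℝ 1 Ψ (Ici 0)) (ht : 0 < t) :
    HasDerivAt (deriv Ψ) (deriv (deriv Φ) (deriv Ψ t))⁻¹ t := by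
  have hcont : ContinuousOn (deriv Ψ) (Ioi 0) :=
    (hΨ1.mono Ioi_subset_Ici_self).continuousOn_deriv_of_isOpen isOpen_Ioi le_rfl
  have hpos := hΦ.deriv_conj_pos hΨ hΨ1 ht
  refine HasDerivAt.of_local_left_inverse (hcont.continuousAt (Ioi_mem_nhds ht))
    (hΦ.hasDerivAt_deriv hpos) (hΦ.deriv_deriv_pos _ hpos).ne' ?_
  filter_upwards [Ioi_mem_nhds ht] with t' ht' using hΦ.deriv_deriv_conj hΨ hΨ1 ht'

lemma mul_integral_deriv_div_sq_le (hΦ : IsRegularNFunction Φ) {m a : ℝ}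
    (hm : ∀ s > 0, m * deriv Φ s ≤ s * deriv (deriv Φ) s) (ha : 0 < a) :
    (m - 1) * ∫ s in Ioc 0 a, deriv Φ s / s ^ 2 ≤ deriv Φ a / a :=
  mul_integral_div_sq_le ha (fun _ hs => hΦ.hasDerivAt_deriv hs.1)
    (fun _ hs => (hΦ.deriv_pos hs.1).le) (fun s hs => hm s hs.1)

lemma mul_integral_inv_deriv_conj_le (hΦ : IsRegularNFunction Φ)
    (hΨ : ∀ t, 0 ≤ t → Ψ t = youngConj Φ t) (hΨ1 : ContDiffOn ℝ 1 Ψ (Ici 0)) {m b : ℝ}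
    (hm : ∀ s > 0, m * deriv Φ s ≤ s * deriv (deriv Φ) s) (hm0 : 0 < m) (hb : 0 < b) :
    (1 - 1 / m) * ∫ s in Ioc 0 b, (deriv Ψ s)⁻¹ ≤ b / deriv Ψ b := by
  refine mul_integral_inv_le hb (fun _ hs => hΦ.hasDerivAt_deriv_conj hΨ hΨ1 hs.1)
    (fun _ hs => hΦ.deriv_conj_pos hΨ hΨ1 hs.1) fun s hs => ?_
  have hr := hΦ.deriv_conj_pos hΨ hΨ1 hs.1
  have hrs := hΦ.deriv_deriv_conj hΨ hΨ1 hs.1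
  have hms := hm _ hr
  rw [hrs] at hms
  rw [← div_eq_mul_inv, div_le_iff₀ (hΦ.deriv_deriv_pos _ hr)]
  calc s = 1 / m * (m * s) := by field_simp
    _ ≤ 1 / m * (deriv Ψ s * deriv (deriv Φ) (deriv Ψ s)) := by gcongr
    _ = _ := by ring

lemma mul_sq_mul_integral_deriv_div_sq_le (hΦ : IsRegularNFunction Φ) {m M δ a : ℝ}
    (hm : ∀ s > 0, m * deriv Φ s ≤ s * deriv (deriv Φ) s)
    (hM : ∀ s > 0, s * deriv Φ s ≤ M * Φ s) (hm1 : 1 < m)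
    (hδ : δ ≤ (m - 1) / (100 * m)) (ha : 0 ≤ a) :
    δ * a ^ 2 * ∫ s in Ioc 0 a, deriv Φ s / s ^ 2 ≤ M / m * Φ a / 100 := by
  rcases ha.eq_or_lt with rfl | ha
  · simp [hΦ.map_zero]
  have hI := hΦ.mul_integral_deriv_div_sq_le hm ha
  have hI0 : 0 ≤ ∫ s in Ioc 0 a, deriv Φ s / s ^ 2 := setIntegral_nonneg measurableSet_Ioc
    fun s hs => div_nonneg (hΦ.deriv_pos hs.1).le (sq_nonneg s)
  have hm0 : 0 < m := by linarith
  calc δ * a ^ 2 * ∫ s in Ioc 0 a, deriv Φ s / s ^ 2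
      ≤ (m - 1) / (100 * m) * a ^ 2 * ∫ s in Ioc 0 a, deriv Φ s / s ^ 2 := by gcongr
    _ = a ^ 2 * ((m - 1) * ∫ s in Ioc 0 a, deriv Φ s / s ^ 2) / (100 * m) := by ring
    _ ≤ a ^ 2 * (deriv Φ a / a) / (100 * m) := by gcongr
    _ = a * deriv Φ a / (100 * m) := by field_simp
    _ ≤ M * Φ a / (100 * m) := by have := hM a ha; gcongr
    _ = M / m * Φ a / 100 := by ring

lemma mul_sq_mul_integral_inv_deriv_conj_le (hΦ : IsRegularNFunction Φ)
    (hΨ : ∀ t, 0 ≤ t → Ψ t = youngConj Φ t) (hΨ1 : ContDiffOn ℝ 1 Ψ (Ici 0)) {m δ a b : ℝ}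
    (hm : ∀ s > 0, m * deriv Φ s ≤ s * deriv (deriv Φ) s) (hm1 : 1 < m)
    (hδ : δ ≤ (m - 1) / (100 * m)) (ha : 0 ≤ a) (hab : deriv Φ a < b) :
    δ * a ^ 2 * ∫ s in Ioc 0 b, (deriv Ψ s)⁻¹ ≤ a * b / 100 := by
  rcases ha.eq_or_lt with rfl | ha
  · simp
  have hb : 0 < b := (hΦ.deriv_pos ha).trans hab
  have hr := hΦ.deriv_conj_pos hΨ hΨ1 hb
  have hrb := hΦ.deriv_deriv_conj hΨ hΨ1 hb
  have har : a ≤ deriv Ψ b :=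
    ((hΦ.strictMonoOn_deriv.lt_iff_lt ha hr).1 (hab.trans_eq hrb.symm)).le
  have hJ := hΦ.mul_integral_inv_deriv_conj_le hΨ hΨ1 hm (by linarith) hb
  have hJ0 : 0 ≤ ∫ s in Ioc 0 b, (deriv Ψ s)⁻¹ := setIntegral_nonneg measurableSet_Ioc
    fun s hs => inv_nonneg.2 (hΦ.deriv_conj_pos hΨ hΨ1 hs.1).le
  have hδ' : (m - 1) / (100 * m) = (1 - 1 / m) / 100 := by field_simp
  calc δ * a ^ 2 * ∫ s in Ioc 0 b, (deriv Ψ s)⁻¹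
      ≤ (1 - 1 / m) / 100 * a ^ 2 * ∫ s in Ioc 0 b, (deriv Ψ s)⁻¹ := by rw [← hδ']; gcongr
    _ = a ^ 2 * ((1 - 1 / m) * ∫ s in Ioc 0 b, (deriv Ψ s)⁻¹) / 100 := by ring
    _ ≤ a ^ 2 * (b / deriv Ψ b) / 100 := by gcongr
    _ = a * b * (a / deriv Ψ b) / 100 := by ring
    _ ≤ a * b * 1 / 100 := by gcongr; exact div_le_one_of_le₀ har hr.le
    _ = a * b / 100 := by ring

end IsRegularNFunction

theorem bellman_upper_bound_general
    (Φ Ψ : ℝ → ℝ) (M mt δ : ℝ)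
    (hconvΦ : ConvexOn ℝ (Ici 0) Φ) (h0Φ : Φ 0 = 0)
    (hlimtopΦ : Tendsto (fun s => Φ s / s) atTop atTop)
    (hcompl : ∀ t : ℝ, 0 ≤ t → Ψ t = sSup ((fun s => s * t - Φ s) '' Ioi 0))
    (hC1Φ : ContDiffOn ℝ 1 Φ (Ici 0)) (hC2Φ : ContDiffOn ℝ 2 Φ (Ioi 0))
    (hC1Ψ : ContDiffOn ℝ 1 Ψ (Ici 0))
    (hΦ'' : ∀ s ∈ Ioi (0:ℝ), 0 < deriv (deriv Φ) s)
    (hlim' : Tendsto (fun s => deriv Φ s / s) (nhdsWithin 0 (Ioi 0)) (nhds 0))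
    (hM : M = sSup {x : ℝ | ∃ s ∈ Ioi (0:ℝ), x = s * deriv Φ s / Φ s})
    (hMbdd : BddAbove {x : ℝ | ∃ s ∈ Ioi (0:ℝ), x = s * deriv Φ s / Φ s})
    (hmt : mt = sInf {x : ℝ | ∃ s ∈ Ioi (0:ℝ), x = s * deriv (deriv Φ) s / deriv Φ s})
    (hmt1 : 1 < mt)
    (hδ : δ ≤ (mt - 1) / (100 * mt))
    (X : ℂ → ℂ → ℝ)
    (hXlow : ∀ u v : ℂ, ‖v‖ ≤ deriv Φ (‖u‖) →
      X u v = (1 + δ) * (Φ (‖u‖) + Ψ (‖v‖))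
        + δ * (‖u‖) ^ 2 * ∫ s in Ioc (0:ℝ) (‖u‖), deriv Φ s / s ^ 2)
    (hXup : ∀ u v : ℂ, deriv Φ (‖u‖) < ‖v‖ →
      X u v = Φ (‖u‖) + Ψ (‖v‖)
        + δ * (‖u‖) ^ 2 * ∫ s in Ioc (0:ℝ) (‖v‖), (deriv Ψ s)⁻¹) :
    ∀ u v : ℂ,
      X u v ≤ 2 * max 1 (M / mt) * (Φ (‖u‖) + Ψ (‖v‖)) := by
  have hΦ : IsRegularNFunction Φ := ⟨hconvΦ, h0Φ, hC1Φ, hC2Φ, hΦ'', hlim', hlimtopΦ⟩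
  have hm : ∀ s > 0, mt * deriv Φ s ≤ s * deriv (deriv Φ) s := fun _ hs =>
    hΦ.mul_deriv_le_mul_deriv_deriv_of_eq_sInf hmt hs
  have hΨ : ∀ t, 0 ≤ t → Ψ t = youngConj Φ t := hcompl
  intro u v
  have hP : 0 ≤ Φ ‖u‖ := hΦ.nonneg (norm_nonneg u)
  have hQ : 0 ≤ Ψ ‖v‖ := (hΨ _ (norm_nonneg v)).symm ▸ hΦ.youngConj_nonneg (norm_nonneg v)
  have hK : 1 ≤ max 1 (M / mt) := le_max_left _ _
  have hδ1 : δ ≤ 1 / 100 :=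
    hδ.trans <| by rw [div_le_div_iff₀ (by positivity) (by norm_num)]; linarith
  rcases le_or_gt ‖v‖ (deriv Φ ‖u‖) with h | h
  · have hE := hΦ.mul_sq_mul_integral_deriv_div_sq_le hm
      (fun _ hs => hΦ.mul_deriv_le_of_eq_sSup hM hMbdd hs) hmt1 hδ (norm_nonneg u)
    rw [hXlow u v h]
    nlinarith [mul_le_mul_of_nonneg_right (le_max_right 1 (M / mt)) hP,
      mul_le_mul_of_nonneg_right hK (add_nonneg hP hQ)]
  · have hE := hΦ.mul_sq_mul_integral_inv_deriv_conj_le hΨ hC1Ψ hm hmt1 hδ (norm_nonneg u) h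
    have hY := hΦ.mul_le_add_youngConj (norm_nonneg u) (norm_nonneg v)
    rw [← hΨ _ (norm_nonneg v)] at hY
    rw [hXup u v h]
    nlinarith [mul_le_mul_of_nonneg_right hK (add_nonneg hP hQ)]

theorem bellman_upper_bound
    (Φ Ψ : ℝ → ℝ) (M mt Mt δ : ℝ)
    (hconvΦ : ConvexOn ℝ (Ici 0) Φ) (h0Φ : Φ 0 = 0)
    (hlim0Φ : Tendsto (fun s => Φ s / s) (nhdsWithin 0 (Ioi 0)) (nhds 0))
    (hlimtopΦ : Tendsto (fun s => Φ s / s) atTop atTop)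
    (hcompl : ∀ t : ℝ, 0 ≤ t → Ψ t = sSup ((fun s => s * t - Φ s) '' Ioi 0))
    (hC1Φ : ContDiffOn ℝ 1 Φ (Ici 0)) (hC2Φ : ContDiffOn ℝ 2 Φ (Ioi 0))
    (hC1Ψ : ContDiffOn ℝ 1 Ψ (Ici 0)) (hC2Ψ : ContDiffOn ℝ 2 Ψ (Ioi 0))
    (hΦ'' : ∀ s ∈ Ioi (0:ℝ), 0 < deriv (deriv Φ) s)
    (hΨ'' : ∀ s ∈ Ioi (0:ℝ), 0 < deriv (deriv Ψ) s)
    (hconv' : StrictConvexOn ℝ (Ioi 0) (deriv Φ))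
    (hlim' : Tendsto (fun s => deriv Φ s / s) (nhdsWithin 0 (Ioi 0)) (nhds 0))
    (hM : M = sSup {x : ℝ | ∃ s ∈ Ioi (0:ℝ), x = s * deriv Φ s / Φ s})
    (hMbdd : BddAbove {x : ℝ | ∃ s ∈ Ioi (0:ℝ), x = s * deriv Φ s / Φ s})
    (hmt : mt = sInf {x : ℝ | ∃ s ∈ Ioi (0:ℝ), x = s * deriv (deriv Φ) s / deriv Φ s})
    (hMt : Mt = sSup {x : ℝ | ∃ s ∈ Ioi (0:ℝ), x = s * deriv (deriv Φ) s / deriv Φ s})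
    (hMtbdd : BddAbove {x : ℝ | ∃ s ∈ Ioi (0:ℝ), x = s * deriv (deriv Φ) s / deriv Φ s})
    (hmt1 : 1 < mt)
    (hδ0 : 0 < δ) (hδ : δ ≤ (mt - 1) / (100 * mt))
    (X : ℂ → ℂ → ℝ)
    (hXlow : ∀ u v : ℂ, ‖v‖ ≤ deriv Φ (‖u‖) →
      X u v = (1 + δ) * (Φ (‖u‖) + Ψ (‖v‖))
        + δ * (‖u‖) ^ 2 * ∫ s in Ioc (0:ℝ) (‖u‖), deriv Φ s / s ^ 2)
    (hXup : ∀ u v : ℂ, deriv Φ (‖u‖) < ‖v‖ →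
      X u v = Φ (‖u‖) + Ψ (‖v‖)
        + δ * (‖u‖) ^ 2 * ∫ s in Ioc (0:ℝ) (‖v‖), (deriv Ψ s)⁻¹) :
    ∀ u v : ℂ,
      X u v ≤ 2 * max 1 (M / mt) * (Φ (‖u‖) + Ψ (‖v‖)) :=
  bellman_upper_bound_general Φ Ψ M mt δ hconvΦ h0Φ hlimtopΦ hcompl hC1Φ hC2Φ hC1Ψ hΦ'' hlim' hM
    hMbdd hmt hmt1 hδ X hXlow hXup
end

section
/- Let R: (0,∞) → ℝ be C² and define 𝔛₂(u,v) := |u|² R(|v|) on (ℂ∖{0})². For any A, B ∈ ℂ^{d×d}, (u,v) ∈ (ℂ∖{0})², (ζ,η) ∈ (ℂ^d)², the generalized Hessian after the substitution ζ → (u/|u|)ζ, η → (v/|v|)η equals Re⟨Aζ, 2R(|v|)ζ + 2|u|R'(|v|)Re η⟩ + Re⟨Bη, 2|u|R'(|v|)Re ζ + |u|²R''(|v|)Re η + i|u|²(R'(|v|)/|v|)Im η⟩. -/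
open Set

/-- Partial derivative of `f : ℝ⁴ → ℝ` in the `i`-th coordinate. -/
noncomputable def pderiv4 (i : Fin 4) (f : (Fin 4 → ℝ) → ℝ) (x : Fin 4 → ℝ) : ℝ :=
  deriv (fun t => f (Function.update x i t)) (x i)

/-- `(i,j)` entry of the real Hessian of `f : ℝ⁴ → ℝ` at `x`. -/
noncomputable def hessEntry (f : (Fin 4 → ℝ) → ℝ) (x : Fin 4 → ℝ) (i j : Fin 4) : ℝ :=
  pderiv4 i (fun y => pderiv4 j f y) x

/-- A function `𝔛 : ℂ² → ℝ` viewed as a function of `(Re u, Im u, Re v, Im v) ∈ ℝ⁴`. -/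
noncomputable def realify (X : ℂ → ℂ → ℝ) : (Fin 4 → ℝ) → ℝ :=
  fun x => X (⟨x 0, x 1⟩ : ℂ) (⟨x 2, x 3⟩ : ℂ)

/-- The generalized Hessian `H^{A,B}_𝔛[(u,v);(ζ,η)]`. -/
noncomputable def genHess {d : ℕ} (X : ℂ → ℂ → ℝ) (A B : Matrix (Fin d) (Fin d) ℂ)
    (u v : ℂ) (ζ η : Fin d → ℂ) : ℝ :=
  let w : Fin 4 → Fin d → ℝ :=
    ![fun k => (ζ k).re, fun k => (ζ k).im, fun k => (η k).re, fun k => (η k).im]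
  let Mw : Fin 4 → Fin d → ℝ :=
    ![fun k => (A.mulVec ζ k).re, fun k => (A.mulVec ζ k).im,
      fun k => (B.mulVec η k).re, fun k => (B.mulVec η k).im]
  let x : Fin 4 → ℝ := ![u.re, u.im, v.re, v.im]
  ∑ i : Fin 4, ∑ j : Fin 4,
    hessEntry (realify X) x i j * ∑ k : Fin d, w j k * Mw i k

/-- The (unnormalized) complex inner product `⟨x, y⟩ = ∑ₖ xₖ ȳₖ` on `ℂ^d`. -/
noncomputable def cinner {d : ℕ} (x y : Fin d → ℂ) : ℂ :=
  ∑ k, x k * (starRingEnd ℂ) (y k)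

/-!
The function is `|a|² R(|b|)` on `ℝ² × ℝ²`. Away from `b = 0` its Hessian follows from the chain
rule for `R ∘ |·|`, and as a bilinear form on `ℂ² ≅ ℝ⁴` it is a combination of real inner products
on `ℂ` with `u` and `v`. The substitution `ζ ↦ (u/|u|) ζ`, `η ↦ (v/|v|) η` rotates each factor: it
preserves `⟪·,·⟫_ℝ` and turns `⟪u, ·⟫_ℝ` into `|u| Re`, `⟪v, ·⟫_ℝ` into `|v| Re`. The part of the
`η`-block orthogonal to `v` then contributes `R'(|v|)/|v| · Im (Bη) Im η`, the `i Im η` term.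
-/

open Filter Topology

def sumSq {ι : Type*} (S : Finset ι) (y : ι → ℝ) : ℝ := ∑ k ∈ S, y k ^ 2

theorem continuous_sumSq {ι : Type*} (S : Finset ι) : Continuous (sumSq S) := by
  unfold sumSq; fun_prop

section LineDerivatives

variable {ι : Type*} [DecidableEq ι] (x : ι → ℝ) (i : ι)

theorem hasDerivAt_piecewise_update (S : Finset ι) (k : ι) (t : ℝ) :
    HasDerivAt (fun s => S.piecewise (Function.update x i s) 0 k)
      (S.piecewise (Pi.single i 1 : ι → ℝ) 0 k) t := by
  by_cases hk : k ∈ S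
  · simpa [hk] using hasDerivAt_pi.mp (hasDerivAt_update x i t) k
  · simpa [hk] using hasDerivAt_const t (0 : ℝ)

theorem hasDerivAt_sumSq_update (S : Finset ι) :
    HasDerivAt (fun t => sumSq S (Function.update x i t)) (2 * S.piecewise x 0 i) (x i) := by
  refine (HasDerivAt.fun_sum fun k (_ : k ∈ S) =>
    (hasDerivAt_pi.mp (hasDerivAt_update x i (x i)) k).fun_pow 2).congr_deriv ?_
  simp [Finset.piecewise, Pi.single_apply]

theorem hasDerivAt_sqrt_sumSq_update (S : Finset ι) (hx : 0 < sumSq S x) :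
    HasDerivAt (fun t => √(sumSq S (Function.update x i t)))
      (S.piecewise x 0 i / √(sumSq S x)) (x i) := by
  convert (hasDerivAt_sumSq_update x i S).sqrt (by simpa using hx.ne') using 1
  simp only [Function.update_eq_self]
  ring

end LineDerivatives

theorem Filter.EventuallyEq.pderiv4_eq {f g : (Fin 4 → ℝ) → ℝ} {x : Fin 4 → ℝ} (h : f =ᶠ[𝓝 x] g)
    (i : Fin 4) : pderiv4 i f x = pderiv4 i g x := by
  have hline : Tendsto (fun t => Function.update x i t) (𝓝 (x i)) (𝓝 x) := by
    simpa using
      ((continuous_const : Continuous fun _ : ℝ => x).update i continuous_id).tendsto (x i)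
  exact Filter.EventuallyEq.deriv_eq (hline.eventually h)

section
variable (S T : Finset (Fin 4)) (R : ℝ → ℝ)

theorem eqOn_pderiv4_sumSq_mul_comp_sqrt (hR : DifferentiableOn ℝ R (Ioi 0)) (i : Fin 4) :
    EqOn (pderiv4 i fun y => sumSq S y * R √(sumSq T y))
      (fun y => 2 * S.piecewise y 0 i * R √(sumSq T y)
        + sumSq S y * (deriv R √(sumSq T y) * (T.piecewise y 0 i / √(sumSq T y))))
      {y | 0 < sumSq T y} := by
  intro y (hy : 0 < sumSq T y)
  have hRy := (hR.differentiableAt (Ioi_mem_nhds (Real.sqrt_pos.mpr hy))).hasDerivAt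
  have h := (hasDerivAt_sumSq_update y i S).fun_mul
    (hRy.comp_of_eq (y i) (hasDerivAt_sqrt_sumSq_update y i T hy) (by simp))
  simp only [Function.comp_def, Function.update_eq_self] at h
  rw [pderiv4, h.deriv]

theorem hessEntry_sumSq_mul_comp_sqrt (hR : DifferentiableOn ℝ R (Ioi 0)) {x : Fin 4 → ℝ}
    {r : ℝ} (hr : √(sumSq T x) = r) (hr0 : 0 < r) (hR' : DifferentiableAt ℝ (deriv R) r)
    (i j : Fin 4) :
    hessEntry (fun y => sumSq S y * R √(sumSq T y)) x i j =
      2 * R r * S.piecewise (Pi.single i 1 : Fin 4 → ℝ) 0 j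
      + 2 * deriv R r / r * (S.piecewise x 0 i * T.piecewise x 0 j
        + S.piecewise x 0 j * T.piecewise x 0 i)
      + sumSq S x * (deriv (deriv R) r / r ^ 2 * (T.piecewise x 0 i * T.piecewise x 0 j)
        + deriv R r / r ^ 3 * (r ^ 2 * T.piecewise (Pi.single i 1 : Fin 4 → ℝ) 0 j
          - T.piecewise x 0 i * T.piecewise x 0 j)) := by
  have hρ₀ : 0 < √(sumSq T x) := hr ▸ hr0
  have hx : 0 < sumSq T x := Real.sqrt_pos.mp hρ₀
  have hgrad := (eqOn_pderiv4_sumSq_mul_comp_sqrt S T R hR j).eventuallyEq_of_mem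
    ((isOpen_lt continuous_const (continuous_sumSq T)).mem_nhds hx)
  rw [hessEntry, hgrad.pderiv4_eq]
  have hρ := hasDerivAt_sqrt_sumSq_update x i T hx
  have hR₁ := (hR.differentiableAt (Ioi_mem_nhds hρ₀)).hasDerivAt.comp_of_eq (x i) hρ (by simp)
  have hR₂ := hR'.hasDerivAt.comp_of_eq (x i) hρ (by simp [hr])
  rw [hr] at hρ
  have h := (((hasDerivAt_piecewise_update x i S j (x i)).const_mul 2).fun_mul hR₁).fun_add
    ((hasDerivAt_sumSq_update x i S).fun_mul (hR₂.fun_mul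
      ((hasDerivAt_piecewise_update x i T j (x i)).fun_div hρ (by simpa [hr] using hr0.ne'))))
  simp only [Function.comp_def, Function.update_eq_self, hr] at h
  rw [pderiv4, h.deriv]
  field_simp
  ring

end

open scoped InnerProductSpace ComplexConjugate

theorem realify_sq_norm_mul_comp_norm (R : ℝ → ℝ) :
    realify (fun a b => ‖a‖ ^ 2 * R ‖b‖) = fun y => sumSq {0, 1} y * R √(sumSq {2, 3} y) := by
  funext y
  rw [realify, Complex.sq_norm, Complex.norm_def]
  simp [sumSq, Complex.normSq_mk, sq]

noncomputable def hessForm (f : (Fin 4 → ℝ) → ℝ) (x p q : Fin 4 → ℝ) : ℝ :=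
  ∑ i, ∑ j, hessEntry f x i j * (p j * q i)

theorem hessForm_realify_sq_norm_mul_comp_norm (R : ℝ → ℝ) (hR : DifferentiableOn ℝ R (Ioi 0))
    (a : ℂ) {b : ℂ} (hb : b ≠ 0) (hR' : DifferentiableAt ℝ (deriv R) ‖b‖) (z w z' w' : ℂ) :
    hessForm (realify fun a b => ‖a‖ ^ 2 * R ‖b‖) ![a.re, a.im, b.re, b.im]
        ![z.re, z.im, w.re, w.im] ![z'.re, z'.im, w'.re, w'.im] =
      2 * R ‖b‖ * ⟪z', z⟫_ℝ
      + 2 * deriv R ‖b‖ / ‖b‖ * (⟪a, z'⟫_ℝ * ⟪b, w⟫_ℝ + ⟪a, z⟫_ℝ * ⟪b, w'⟫_ℝ)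
      + ‖a‖ ^ 2 * (deriv (deriv R) ‖b‖ / ‖b‖ ^ 2 * (⟪b, w'⟫_ℝ * ⟪b, w⟫_ℝ)
        + deriv R ‖b‖ / ‖b‖ ^ 3 * (‖b‖ ^ 2 * ⟪w', w⟫_ℝ - ⟪b, w'⟫_ℝ * ⟪b, w⟫_ℝ)) := by
  have hr : √(sumSq {2, 3} ![a.re, a.im, b.re, b.im]) = ‖b‖ := by
    simp [sumSq, Complex.norm_def, Complex.normSq_apply, sq]
  have ha : sumSq {0, 1} ![a.re, a.im, b.re, b.im] = ‖a‖ ^ 2 := by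
    rw [Complex.sq_norm, Complex.normSq_apply]
    simp [sumSq, sq]
  simp only [hessForm, realify_sq_norm_mul_comp_norm,
    hessEntry_sumSq_mul_comp_sqrt _ _ R hR hr (norm_pos_iff.mpr hb) hR', ha]
  simp only [Fin.sum_univ_four, Finset.piecewise, Finset.mem_insert, Finset.mem_singleton,
    Pi.single_apply, Pi.zero_apply, Fin.reduceEq, ↓reduceIte, or_false, or_true, Matrix.cons_val,
    Complex.inner, Complex.mul_re, Complex.conj_re, Complex.conj_im]
  ring

theorem genHess_eq_sum_hessForm {d : ℕ} (X : ℂ → ℂ → ℝ) (A B : Matrix (Fin d) (Fin d) ℂ)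
    (u v : ℂ) (ζ η : Fin d → ℂ) :
    genHess X A B u v ζ η = ∑ k, hessForm (realify X) ![u.re, u.im, v.re, v.im]
      ![(ζ k).re, (ζ k).im, (η k).re, (η k).im]
      ![(A.mulVec ζ k).re, (A.mulVec ζ k).im, (B.mulVec η k).re, (B.mulVec η k).im] := by
  simp only [genHess, hessForm, Finset.mul_sum]
  rw [Finset.sum_congr rfl fun i _ => Finset.sum_comm, Finset.sum_comm]
  refine Finset.sum_congr rfl fun k _ => Finset.sum_congr rfl fun i _ =>
    Finset.sum_congr rfl fun j _ => ?_
  fin_cases i <;> fin_cases j <;> rfl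

theorem Complex.real_inner_div_norm_mul_div_norm_mul {u : ℂ} (hu : u ≠ 0) (z w : ℂ) :
    ⟪u / ‖u‖ * z, u / ‖u‖ * w⟫_ℝ = ⟪z, w⟫_ℝ := by
  have h : (‖u‖ : ℂ) ≠ 0 := by simpa using hu
  simp only [Complex.inner, map_mul, map_div₀, Complex.conj_ofReal]
  rw [show u / ‖u‖ * w * (conj u / ‖u‖ * conj z) = u * conj u / (‖u‖ * ‖u‖) * (w * conj z) by
    ring, Complex.mul_conj, Complex.normSq_eq_norm_sq]
  push_cast
  rw [← sq, div_self (pow_ne_zero 2 h), one_mul]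

theorem Complex.real_inner_self_div_norm_mul {u : ℂ} (hu : u ≠ 0) (z : ℂ) :
    ⟪u, u / ‖u‖ * z⟫_ℝ = ‖u‖ * z.re := by
  have h : (‖u‖ : ℂ) ≠ 0 := by simpa using hu
  simp only [Complex.inner]
  rw [show u / ‖u‖ * z * conj u = (u * conj u / ‖u‖) * z by ring,
    Complex.mul_conj, Complex.normSq_eq_norm_sq]
  push_cast
  rw [sq, mul_div_cancel_right₀ _ h, Complex.re_ofReal_mul]

theorem generalized_hessian_of_mixed_term {d : ℕ}
    (R : ℝ → ℝ) (hR : ContDiffOn ℝ 2 R (Ioi 0))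
    (A B : Matrix (Fin d) (Fin d) ℂ)
    (u v : ℂ) (hu : u ≠ 0) (hv : v ≠ 0) (ζ η : Fin d → ℂ) :
    genHess (fun a b => (‖a‖) ^ 2 * R (‖b‖)) A B u v
        (fun k => (u / (‖u‖ : ℂ)) * ζ k)
        (fun k => (v / (‖v‖ : ℂ)) * η k)
    = (cinner (A.mulVec ζ) (fun k =>
        (((2 * R (‖v‖) : ℝ) : ℂ)) * ζ k
        + (((2 * ‖u‖ * deriv R (‖v‖) : ℝ) : ℂ)) * (((η k).re : ℝ) : ℂ))).re
    + (cinner (B.mulVec η) (fun k =>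
        (((2 * ‖u‖ * deriv R (‖v‖) : ℝ) : ℂ)) * (((ζ k).re : ℝ) : ℂ)
        + ((((‖u‖) ^ 2 * deriv (deriv R) (‖v‖) : ℝ) : ℂ)) * (((η k).re : ℝ) : ℂ)
        + Complex.I * ((((‖u‖) ^ 2 * (deriv R (‖v‖) / ‖v‖) : ℝ) : ℂ)) * (((η k).im : ℝ) : ℂ))).re := by
  have hv₀ : 0 < ‖v‖ := norm_pos_iff.mpr hv
  have hR₁ : DifferentiableOn ℝ R (Ioi 0) := hR.differentiableOn (by norm_num)
  have hR₂ : DifferentiableAt ℝ (deriv R) ‖v‖ :=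
    ((hR.deriv_of_isOpen isOpen_Ioi (m := 1) (by norm_num)).differentiableOn
      one_ne_zero).differentiableAt (Ioi_mem_nhds hv₀)
  have hmulVec (M : Matrix (Fin d) (Fin d) ℂ) (c : ℂ) (x : Fin d → ℂ) :
      M.mulVec (fun k => c * x k) = c • M.mulVec x :=
    M.mulVec_smul c x
  rw [genHess_eq_sum_hessForm, cinner, cinner, Complex.re_sum, Complex.re_sum,
    ← Finset.sum_add_distrib]
  refine Finset.sum_congr rfl fun k _ => ?_
  simp only [hmulVec, Pi.smul_apply, smul_eq_mul,
    hessForm_realify_sq_norm_mul_comp_norm R hR₁ u hv hR₂,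
    Complex.real_inner_div_norm_mul_div_norm_mul hu, Complex.real_inner_div_norm_mul_div_norm_mul hv,
    Complex.real_inner_self_div_norm_mul hu, Complex.real_inner_self_div_norm_mul hv]
  simp only [Complex.inner, map_add, map_mul, Complex.conj_ofReal, Complex.conj_I, Complex.mul_re,
    Complex.mul_im, Complex.add_re, Complex.add_im, Complex.conj_re, Complex.conj_im,
    Complex.neg_re, Complex.neg_im, Complex.ofReal_re, Complex.ofReal_im, Complex.I_re, Complex.I_im]
  field_simp
  ring
end
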